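/- arXiv:2604.19963 — 2 statements merged into one kernel-verified Lean document; each statement's English description precedes it below -/
import Mathlib

section
/- The class of languages generated by forbidden random context cooperating distributed grammar systems in the =2 mode is included in the class of languages generated by CD grammar systems with forbidden random context entry conditions in the =2 mode, both with and without erasing productions: fRCCD(=2) ⊆ CD(=2, frc) and fRCCD^{-λ}(=2) ⊆ CD^{-λ}(=2, frc). -/
namespace GrammarSystems

/-! Symbols: nonterminals are (encoded as) natural numbers, terminals come from `T`. -/

/-- A symbol is either a nonterminal (a natural number) or a terminal from `T`. -/
abbrev Sym (T : Type) := ℕ ⊕ T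

/-- A sentential form: a word over `N ∪ Σ`. -/
abbrev Word (T : Type) := List (Sym T)

/-- A context-free production `A → y`. -/
structure CFRule (T : Type) where
  lhs : ℕ
  rhs : Word T

/-- A production is erasing if its right-hand side is the empty word `λ`. -/
def CFRule.Erasing {T : Type} (r : CFRule T) : Prop := r.rhs = []

/-- One rewriting step `u = xAz ⇒ xyz = v` using the rule `r = A → y`. -/
def CFRule.Rewrites {T : Type} (r : CFRule T) (u v : Word T) : Prop :=
  ∃ x z : Word T, u = x ++ [Sum.inl r.lhs] ++ z ∧ v = x ++ r.rhs ++ z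

/-- Ordinary one-step context-free derivation of a set (list) of productions. -/
def cfStep {T : Type} (P : List (CFRule T)) (u v : Word T) : Prop :=
  ∃ r ∈ P, r.Rewrites u v

/-- `iter r n u v` : `u` derives `v` in exactly `n` steps of the relation `r`. -/
def iter {α : Type*} (r : α → α → Prop) : ℕ → α → α → Prop
  | 0 => Eq
  | n + 1 => fun u v => ∃ w, r u w ∧ iter r n w v

/-- The derivation modes of CD grammar systems: `≤ k`, `= k`, `≥ k`, `*` and `t`. -/
inductive Mode where
  | le (k : ℕ)
  | eq (k : ℕ)
  | ge (k : ℕ)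
  | star
  | t

/-- The mode relation induced by a one-step derivation relation `r`. -/
def ModeRel {α : Type*} (r : α → α → Prop) : Mode → α → α → Prop
  | .le k => fun u v => ∃ j, 1 ≤ j ∧ j ≤ k ∧ iter r j u v
  | .eq k => iter r k
  | .ge k => fun u v => ∃ j, k ≤ j ∧ iter r j u v
  | .star => Relation.ReflTransGen r
  | .t => fun u v => Relation.ReflTransGen r u v ∧ ∀ w, ¬ r v w

/-- A terminal word viewed as a sentential form. -/
def encodeWord {T : Type} (w : List T) : Word T := w.map Sum.inr

/-- The language generated from start symbol `S` by iterating the relation `step`. -/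
def langOf {T : Type} (step : Word T → Word T → Prop) (S : ℕ) : Language T :=
  {w | Relation.ReflTransGen step [Sum.inl S] (encodeWord w)}

/-! ### Ordered grammars and ordered CD grammar systems -/

/-- A component of an ordered CD grammar system: a finite set of context-free
productions together with a strict order (transitive and asymmetric) on rules. -/
structure OComponent (T : Type) where
  rules : List (CFRule T)
  gt : CFRule T → CFRule T → Prop
  gt_trans : ∀ {p q r}, gt p q → gt q r → gt p r
  gt_asymm : ∀ {p q}, gt p q → ¬ gt q p

/-- One-step derivation of an ordered grammar (component): apply a rule only if
no strictly greater rule has its left-hand side occurring in the sentential form. -/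
def OComponent.Step {T : Type} (C : OComponent T) (u v : Word T) : Prop :=
  ∃ r ∈ C.rules, r.Rewrites u v ∧
    ∀ r' ∈ C.rules, C.gt r' r → Sum.inl r'.lhs ∉ u

/-- A component has no erasing productions. -/
def OComponent.NonErasing {T : Type} (C : OComponent T) : Prop :=
  ∀ r ∈ C.rules, ¬ r.Erasing

/-- An ordered cooperating distributed grammar system (OCDGS). -/
structure OCDGS (T : Type) where
  comps : List (OComponent T)
  start : ℕ

/-- The derivation relation `⇒_{G,m}` of an OCDGS in mode `m`. -/
def OCDGS.SysStep {T : Type} (G : OCDGS T) (m : Mode) (u v : Word T) : Prop :=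
  ∃ C ∈ G.comps, ModeRel C.Step m u v

/-- The language of an OCDGS in mode `m`. -/
def OCDGS.lang {T : Type} (G : OCDGS T) (m : Mode) : Language T :=
  langOf (G.SysStep m) G.start

/-- An OCDGS without erasing productions. -/
def OCDGS.NonErasing {T : Type} (G : OCDGS T) : Prop :=
  ∀ C ∈ G.comps, C.NonErasing

/-- The class `OCD(m)`. -/
def OCD (T : Type) (m : Mode) : Set (Language T) :=
  {L | ∃ G : OCDGS T, L = G.lang m}

/-- The class `OCD^{-λ}(m)`. -/
def OCDne (T : Type) (m : Mode) : Set (Language T) :=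
  {L | ∃ G : OCDGS T, G.NonErasing ∧ L = G.lang m}

/-- The class `OCDₙ(m)`: at most `n` components. -/
def OCDbound (T : Type) (n : ℕ) (m : Mode) : Set (Language T) :=
  {L | ∃ G : OCDGS T, G.comps.length ≤ n ∧ L = G.lang m}

/-- The class `OCDₙ^{-λ}(m)`. -/
def OCDboundNE (T : Type) (n : ℕ) (m : Mode) : Set (Language T) :=
  {L | ∃ G : OCDGS T, G.comps.length ≤ n ∧ G.NonErasing ∧ L = G.lang m}

/-- The class `ORD` of languages of ordered grammars. -/
def ORD (T : Type) : Set (Language T) :=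
  {L | ∃ (C : OComponent T) (S : ℕ), L = langOf C.Step S}

/-- The class `ORD^{-λ}`. -/
def ORDne (T : Type) : Set (Language T) :=
  {L | ∃ (C : OComponent T) (S : ℕ), C.NonErasing ∧ L = langOf C.Step S}

/-! ### Forbidden random context grammars and CD grammar systems -/

/-- A forbidden random context rule `(A → y, F)`. -/
structure FRCRule (T : Type) where
  lhs : ℕ
  rhs : Word T
  forb : Finset ℕ

/-- One-step derivation of a forbidden random context grammar (component). -/
def frcStep {T : Type} (P : List (FRCRule T)) (u v : Word T) : Prop :=
  ∃ r ∈ P, (∃ x z : Word T, u = x ++ [Sum.inl r.lhs] ++ z ∧ v = x ++ r.rhs ++ z) ∧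
    ∀ A ∈ r.forb, Sum.inl A ∉ u

/-- A forbidden random context CD grammar system (fRCCDGS). -/
structure FRCCDGS (T : Type) where
  comps : List (List (FRCRule T))
  start : ℕ

/-- The derivation relation `⇒_{G,m}` of an fRCCDGS in mode `m`. -/
def FRCCDGS.SysStep {T : Type} (G : FRCCDGS T) (m : Mode) (u v : Word T) : Prop :=
  ∃ P ∈ G.comps, ModeRel (frcStep P) m u v

/-- The language of an fRCCDGS in mode `m`. -/
def FRCCDGS.lang {T : Type} (G : FRCCDGS T) (m : Mode) : Language T :=
  langOf (G.SysStep m) G.start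

/-- An fRCCDGS without erasing productions. -/
def FRCCDGS.NonErasing {T : Type} (G : FRCCDGS T) : Prop :=
  ∀ P ∈ G.comps, ∀ r ∈ P, r.rhs ≠ []

/-- The class `fRCCD(m)`. -/
def fRCCD (T : Type) (m : Mode) : Set (Language T) :=
  {L | ∃ G : FRCCDGS T, L = G.lang m}

/-- The class `fRCCD^{-λ}(m)`. -/
def fRCCDne (T : Type) (m : Mode) : Set (Language T) :=
  {L | ∃ G : FRCCDGS T, G.NonErasing ∧ L = G.lang m}

/-- The class `fRCCDₙ(m)`: at most `n` components. -/
def fRCCDbound (T : Type) (n : ℕ) (m : Mode) : Set (Language T) :=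
  {L | ∃ G : FRCCDGS T, G.comps.length ≤ n ∧ L = G.lang m}

/-- The class `fRCCDₙ^{-λ}(m)`. -/
def fRCCDboundNE (T : Type) (n : ℕ) (m : Mode) : Set (Language T) :=
  {L | ∃ G : FRCCDGS T, G.comps.length ≤ n ∧ G.NonErasing ∧ L = G.lang m}

/-- The class `fRC` of languages of single forbidden random context grammars. -/
def fRC (T : Type) : Set (Language T) :=
  {L | ∃ (P : List (FRCRule T)) (S : ℕ), L = langOf (frcStep P) S}

/-- The class `fRC^{-λ}`. -/
def fRCne (T : Type) : Set (Language T) :=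
  {L | ∃ (P : List (FRCRule T)) (S : ℕ), (∀ r ∈ P, r.rhs ≠ []) ∧ L = langOf (frcStep P) S}

/-! ### Graph-controlled grammars with appearance checking -/

/-- A rule of a graph-controlled grammar: a context-free production together with
a success field and a failure field (sets of labels). The label of a rule is its
index in the rule list, so the labeling is automatically injective. -/
structure GCRule (T : Type) where
  prod : CFRule T
  succ : Finset ℕ
  fail : Finset ℕ

/-- A graph-controlled grammar with appearance checking. -/
structure GCGrammar (T : Type) where
  rules : List (GCRule T)
  init : Finset ℕ
  final : Finset ℕ
  start : ℕ

/-- One-step derivation on configurations `(sentential form, label)`: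
either the production of the current rule is applied and we move to a label of the
success field, or it is not applicable (its left-hand side does not occur) and we
move, without changing the sentential form, to a label of the failure field. -/
def GCGrammar.Step {T : Type} (G : GCGrammar T) :
    (Word T × ℕ) → (Word T × ℕ) → Prop := fun c c' =>
  ∃ r, G.rules[c.2]? = some r ∧
    ((r.prod.Rewrites c.1 c'.1 ∧ c'.2 ∈ r.succ) ∨
     (Sum.inl r.prod.lhs ∉ c.1 ∧ c'.1 = c.1 ∧ c'.2 ∈ r.fail))

/-- The language of a graph-controlled grammar: terminal words reachable from
`(S, ℓ₀)` with `ℓ₀` initial, in at least one step, ending in a final label. -/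
def GCGrammar.lang {T : Type} (G : GCGrammar T) : Language T :=
  {w | ∃ l₀ ∈ G.init, ∃ lf ∈ G.final,
    Relation.TransGen G.Step ([Sum.inl G.start], l₀) (encodeWord w, lf)}

/-- A graph-controlled grammar without erasing productions. -/
def GCGrammar.NonErasing {T : Type} (G : GCGrammar T) : Prop :=
  ∀ r ∈ G.rules, r.prod.rhs ≠ []

/-- The class `GC_ac`. -/
def GCac (T : Type) : Set (Language T) :=
  {L | ∃ G : GCGrammar T, L = G.lang}

/-- The class `GC_ac^{-λ}`. -/
def GCacNE (T : Type) : Set (Language T) :=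
  {L | ∃ G : GCGrammar T, G.NonErasing ∧ L = G.lang}

/-! ### Recursively enumerable languages -/

/-- The class `RE` of recursively enumerable languages over `T`:
those whose membership predicate is computably enumerable. -/
def REclass (T : Type) [Primcodable T] : Set (Language T) :=
  {L | REPred (· ∈ L)}

/-! ### CD grammar systems with random context entry conditions -/

/-- A component of a CD grammar system with random context entry conditions:
a set of context-free productions with permitting set `perm` and forbidding set `forb`. -/
structure RCComponent (T : Type) where
  rules : List (CFRule T)
  perm : Finset ℕ
  forb : Finset ℕ

/-- `u ⇒ᵢ^{m,rc} v` for a component with random context entry conditions. -/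
def RCComponent.Step {T : Type} (C : RCComponent T) (m : Mode) (u v : Word T) : Prop :=
  ModeRel (cfStep C.rules) m u v ∧
    (∀ A ∈ C.perm, Sum.inl A ∈ u) ∧ (∀ A ∈ C.forb, Sum.inl A ∉ u)

/-- A CD grammar system with random context entry conditions. -/
structure RCCDGS (T : Type) where
  comps : List (RCComponent T)
  start : ℕ

/-- The derivation relation `⇒_{G,m,rc}`. -/
def RCCDGS.SysStep {T : Type} (G : RCCDGS T) (m : Mode) (u v : Word T) : Prop :=
  ∃ C ∈ G.comps, C.Step m u v

/-- The language `L(G, m, rc)`. -/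
def RCCDGS.lang {T : Type} (G : RCCDGS T) (m : Mode) : Language T :=
  langOf (G.SysStep m) G.start

/-- No erasing productions. -/
def RCCDGS.NonErasing {T : Type} (G : RCCDGS T) : Prop :=
  ∀ C ∈ G.comps, ∀ r ∈ C.rules, r.rhs ≠ []

/-- The class `CD(m, rc)`. -/
def CDrc (T : Type) (m : Mode) : Set (Language T) :=
  {L | ∃ G : RCCDGS T, L = G.lang m}

/-- The class `CD^{-λ}(m, rc)`. -/
def CDrcNE (T : Type) (m : Mode) : Set (Language T) :=
  {L | ∃ G : RCCDGS T, G.NonErasing ∧ L = G.lang m}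

/-- The class `CD(m, frc)`: all permitting sets empty. -/
def CDfrc (T : Type) (m : Mode) : Set (Language T) :=
  {L | ∃ G : RCCDGS T, (∀ C ∈ G.comps, C.perm = ∅) ∧ L = G.lang m}

/-- The class `CD^{-λ}(m, frc)`. -/
def CDfrcNE (T : Type) (m : Mode) : Set (Language T) :=
  {L | ∃ G : RCCDGS T, (∀ C ∈ G.comps, C.perm = ∅) ∧ G.NonErasing ∧ L = G.lang m}

/-- The class `CD(m)` of ordinary CD grammar systems: all context conditions empty. -/
def CD (T : Type) (m : Mode) : Set (Language T) :=
  {L | ∃ G : RCCDGS T, (∀ C ∈ G.comps, C.perm = ∅ ∧ C.forb = ∅) ∧ L = G.lang m}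

/-- The class `CD^{-λ}(m)`. -/
def CDne (T : Type) (m : Mode) : Set (Language T) :=
  {L | ∃ G : RCCDGS T, (∀ C ∈ G.comps, C.perm = ∅ ∧ C.forb = ∅) ∧ G.NonErasing ∧
    L = G.lang m}

/-! ### CD grammar systems with priorities -/

/-- A CD grammar system with priorities: components with a strict order
(transitive and asymmetric) on (indices of) components. -/
structure PCDGS (T : Type) where
  comps : List (List (CFRule T))
  gt : Fin comps.length → Fin comps.length → Prop
  gt_trans : ∀ {i j k}, gt i j → gt j k → gt i k
  gt_asymm : ∀ {i j}, gt i j → ¬ gt j i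

theorem PCDGS.gt_wf {T : Type} (G : PCDGS T) : WellFounded G.gt := by
  have h1 : IsTrans (Fin G.comps.length) G.gt := ⟨fun _ _ _ => G.gt_trans⟩
  have h2 : IsIrrefl (Fin G.comps.length) G.gt := ⟨fun _ h => G.gt_asymm h h⟩
  exact Finite.wellFounded_of_trans_of_irrefl G.gt

/-- Start symbol comes separately (so that `gt` can mention `comps.length`). -/
structure PCDGSs (T : Type) extends PCDGS T where
  start : ℕ

/-- `G.Enabled m i x` : component `i` can make a prioritized `m`-mode step from `x`,
defined by recursion along the (well-founded) strict order `>`: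
component `i` is enabled iff it can make an (unprioritized) `m`-step and no
component of higher priority is enabled. -/
def PCDGS.Enabled {T : Type} (G : PCDGS T) (m : Mode) :
    Fin G.comps.length → Word T → Prop :=
  G.gt_wf.fix (C := fun _ => Word T → Prop) fun i ih x =>
    (∃ z, ModeRel (cfStep (G.comps.get i)) m x z) ∧
    ∀ (j : Fin G.comps.length) (h : G.gt j i), ¬ ih j h x

/-- The prioritized derivation relation `⇒_{m,>}`: `u ⇒ᵢ^{m,>} v` iff `u ⇒ᵢ^{m} v`
and no component of strictly higher priority can make a prioritized `m`-step from `u`. -/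
def PCDGS.PStep {T : Type} (G : PCDGS T) (m : Mode) (u v : Word T) : Prop :=
  ∃ i : Fin G.comps.length,
    ModeRel (cfStep (G.comps.get i)) m u v ∧
    ∀ j : Fin G.comps.length, G.gt j i → ¬ G.Enabled m j u

/-- The language `L_m(G)` of a PCDGS. -/
def PCDGSs.lang {T : Type} (G : PCDGSs T) (m : Mode) : Language T :=
  langOf (G.toPCDGS.PStep m) G.start

/-- No erasing productions. -/
def PCDGSs.NonErasing {T : Type} (G : PCDGSs T) : Prop :=
  ∀ P ∈ G.comps, ∀ r ∈ P, r.rhs ≠ []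

/-- The class `PCD(m)`. -/
def PCD (T : Type) (m : Mode) : Set (Language T) :=
  {L | ∃ G : PCDGSs T, L = G.lang m}

/-- The class `PCD^{-λ}(m)`. -/
def PCDne (T : Type) (m : Mode) : Set (Language T) :=
  {L | ∃ G : PCDGSs T, G.NonErasing ∧ L = G.lang m}

end GrammarSystems


open GrammarSystems

namespace Sim
noncomputable section
open scoped Classical

variable {T : Type}

/-- Count of occurrences of nonterminal `n` in a word. -/
def cnt (n : ℕ) (w : Word T) : ℕ := (w.map fun s => if s = Sum.inl n then 1 else 0).sum

@[simp] lemma cnt_nil (n : ℕ) : cnt n ([] : Word T) = 0 := rfl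

@[simp] lemma cnt_append (n : ℕ) (a b : Word T) : cnt n (a ++ b) = cnt n a + cnt n b := by
  simp [cnt]

@[simp] lemma cnt_cons (n : ℕ) (s : Sym T) (a : Word T) :
    cnt n (s :: a) = (if s = Sum.inl n then 1 else 0) + cnt n a := by
  simp [cnt]

lemma cnt_pos_iff {n : ℕ} {w : Word T} : 0 < cnt n w ↔ Sum.inl n ∈ w := by
  induction w with
  | nil => simp
  | cons s a ih =>
    by_cases h : s = Sum.inl n <;> simp [h, ih]
    exact fun he => absurd he.symm h

lemma cnt_eq_zero {n : ℕ} {w : Word T} (h : Sum.inl n ∉ w) : cnt n w = 0 := by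
  by_contra hc
  exact h (cnt_pos_iff.mp (Nat.pos_of_ne_zero hc))

lemma mem_of_cnt_pos {n : ℕ} {w : Word T} (h : 0 < cnt n w) : Sum.inl n ∈ w :=
  cnt_pos_iff.mp h

@[simp] lemma cnt_single (n : ℕ) (s : Sym T) :
    cnt n [s] = if s = Sum.inl n then 1 else 0 := by simp [cnt]

lemma cnt_encodeWord (n : ℕ) (w : List T) : cnt n (encodeWord w) = 0 := by
  apply cnt_eq_zero
  simp [encodeWord]

lemma iter_two {α : Type*} {r : α → α → Prop} {u v : α} :
    iter r 2 u v ↔ ∃ w, r u w ∧ r w v := by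
  constructor
  · rintro ⟨w, h1, w', h2, h3⟩
    cases h3; exact ⟨w, h1, h2⟩
  · rintro ⟨w, h1, h2⟩
    exact ⟨w, h1, v, h2, rfl⟩



/-! ### The bound `N0` on nonterminals of `G` -/

def ruleNats (r : FRCRule T) : List ℕ :=
  r.lhs :: ((r.rhs.filterMap fun s => s.getLeft?) ++ r.forb.toList)

def allNats (G : FRCCDGS T) : List ℕ :=
  G.start :: G.comps.flatMap fun P => P.flatMap ruleNats

def N0 (G : FRCCDGS T) : ℕ := (allNats G).foldr max 0 + 1

lemma le_foldr_max {l : List ℕ} {n : ℕ} (h : n ∈ l) : n ≤ l.foldr max 0 := by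
  induction l with
  | nil => cases h
  | cons a t ih =>
    rcases List.mem_cons.mp h with rfl | h
    · exact le_max_left _ _
    · exact le_trans (ih h) (le_max_right _ _)

lemma lt_N0 {G : FRCCDGS T} {n : ℕ} (h : n ∈ allNats G) : n < N0 G :=
  Nat.lt_succ_of_le (le_foldr_max h)

lemma start_lt_N0 (G : FRCCDGS T) : G.start < N0 G := lt_N0 (List.mem_cons_self)

lemma ruleNats_lt {G : FRCCDGS T} {P r} (hP : P ∈ G.comps) (hr : r ∈ P) :
    ∀ n ∈ ruleNats r, n < N0 G := fun n hn =>
  lt_N0 (List.mem_cons_of_mem _ (List.mem_flatMap.mpr ⟨P, hP, List.mem_flatMap.mpr ⟨r, hr, hn⟩⟩))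

lemma lhs_lt {G : FRCCDGS T} {P r} (hP : P ∈ G.comps) (hr : r ∈ P) : r.lhs < N0 G :=
  ruleNats_lt hP hr _ (List.mem_cons_self)

lemma rhs_lt {G : FRCCDGS T} {P r} (hP : P ∈ G.comps) (hr : r ∈ P) :
    ∀ n, Sum.inl n ∈ r.rhs → n < N0 G := by
  intro n hn
  refine ruleNats_lt hP hr n (List.mem_cons_of_mem _ (List.mem_append.mpr (Or.inl ?_)))
  exact List.mem_filterMap.mpr ⟨Sum.inl n, hn, rfl⟩

lemma forb_lt {G : FRCCDGS T} {P r} (hP : P ∈ G.comps) (hr : r ∈ P) :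
    ∀ n ∈ r.forb, n < N0 G := fun n hn =>
  ruleNats_lt hP hr n (List.mem_cons_of_mem _ (List.mem_append.mpr (Or.inr (Finset.mem_toList.mpr hn))))

/-! ### Pairs of rules -/

structure PD (T : Type) where
  P : List (FRCRule T)
  r1 : FRCRule T
  r2 : FRCRule T

def pairs (G : FRCCDGS T) : List (PD T) :=
  G.comps.flatMap fun P => P.flatMap fun r1 => P.map fun r2 => ⟨P, r1, r2⟩

lemma pairs_valid {G : FRCCDGS T} {p : PD T} (h : p ∈ pairs G) :
    p.P ∈ G.comps ∧ p.r1 ∈ p.P ∧ p.r2 ∈ p.P := by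
  rcases List.mem_flatMap.mp h with ⟨P, hP, h⟩
  rcases List.mem_flatMap.mp h with ⟨r1, hr1, h⟩
  rcases List.mem_map.mp h with ⟨r2, hr2, rfl⟩
  exact ⟨hP, hr1, hr2⟩

lemma mem_pairs {G : FRCCDGS T} {P r1 r2} (hP : P ∈ G.comps) (h1 : r1 ∈ P) (h2 : r2 ∈ P) :
    (⟨P, r1, r2⟩ : PD T) ∈ pairs G :=
  List.mem_flatMap.mpr ⟨P, hP, List.mem_flatMap.mpr ⟨r1, h1,
    List.mem_map.mpr ⟨r2, h2, rfl⟩⟩⟩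

def dPD : PD T := ⟨[], ⟨0, [], ∅⟩, ⟨0, [], ∅⟩⟩

def pget (G : FRCCDGS T) (i : ℕ) : PD T := (pairs G).getD i dPD

lemma pget_mem {G : FRCCDGS T} {i : ℕ} (h : i < (pairs G).length) : pget G i ∈ pairs G := by
  rw [pget, List.getD_eq_getElem _ _ h]
  exact List.getElem_mem _

/-! ### Fresh symbols and pieces of the pair `i` -/

def f (G : FRCCDGS T) (i k : ℕ) : ℕ := N0 G + 9 * i + k

def FreshSet (G : FRCCDGS T) : Finset ℕ :=
  Finset.Ico (N0 G) (N0 G + 9 * (pairs G).length)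

lemma f_mem_FreshSet {G : FRCCDGS T} {i k : ℕ} (hi : i < (pairs G).length) (hk : k < 9) :
    f G i k ∈ FreshSet G := by
  simp only [FreshSet, Finset.mem_Ico, f]
  omega

lemma f_inj {G : FRCCDGS T} {i k i' k' : ℕ} (hk : k < 9) (hk' : k' < 9)
    (h : f G i k = f G i' k') : i = i' ∧ k = k' := by
  simp only [f] at h; omega

lemma f_ge {G : FRCCDGS T} (i k : ℕ) : N0 G ≤ f G i k := by simp [f]; omega

def nA (G : FRCCDGS T) (i : ℕ) : ℕ := (pget G i).r1.lhs
def nB (G : FRCCDGS T) (i : ℕ) : ℕ := (pget G i).r2.lhs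
def eF (G : FRCCDGS T) (i : ℕ) : Finset ℕ := (pget G i).r1.forb
def eE (G : FRCCDGS T) (i : ℕ) : Finset ℕ := (pget G i).r2.forb
def rst (G : FRCCDGS T) (i : ℕ) : Word T := (pget G i).r1.rhs.take 1
def tl (G : FRCCDGS T) (i : ℕ) : Word T := (pget G i).r1.rhs.drop 1
def zz (G : FRCCDGS T) (i : ℕ) : Word T := (pget G i).r2.rhs

def ok (G : FRCCDGS T) (i : ℕ) : Prop := ∀ e ∈ eE G i, Sum.inl e ∉ rst G i
def track (G : FRCCDGS T) (i : ℕ) : Prop := rst G i = [Sum.inl (nB G i)]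

/-! ### The simulating components -/

def c1 (G : FRCCDGS T) (i : ℕ) : RCComponent T :=
  ⟨[⟨nA G i, [Sum.inl (f G i 0)]⟩, ⟨f G i 0, Sum.inl (f G i 1) :: tl G i⟩], ∅,
    eF G i ∪ FreshSet G⟩
def c2 (G : FRCCDGS T) (i : ℕ) : RCComponent T :=
  ⟨[⟨nB G i, [Sum.inl (f G i 3)]⟩, ⟨f G i 1, [Sum.inl (f G i 2)]⟩], ∅,
    eE G i ∪ (FreshSet G \ {f G i 1})⟩
def c3 (G : FRCCDGS T) (i : ℕ) : RCComponent T :=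
  ⟨[⟨f G i 3, [Sum.inl (f G i 4)]⟩, ⟨f G i 4, [Sum.inl (f G i 5)]⟩], ∅,
    FreshSet G \ {f G i 3, f G i 2}⟩
def c4 (G : FRCCDGS T) (i : ℕ) : RCComponent T :=
  ⟨[⟨f G i 5, zz G i⟩, ⟨f G i 2, rst G i⟩], ∅,
    FreshSet G \ {f G i 5, f G i 2}⟩
def c5 (G : FRCCDGS T) (i : ℕ) : RCComponent T :=
  ⟨[⟨f G i 1, [Sum.inl (f G i 6)]⟩, ⟨f G i 6, [Sum.inl (f G i 7)]⟩], ∅,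
    eE G i ∪ (FreshSet G \ {f G i 1})⟩
def c6 (G : FRCCDGS T) (i : ℕ) : RCComponent T :=
  ⟨[⟨f G i 7, [Sum.inl (f G i 8)]⟩, ⟨f G i 8, zz G i⟩], ∅,
    FreshSet G \ {f G i 7}⟩

def compFor (G : FRCCDGS T) (i : ℕ) : List (RCComponent T) :=
  if ok G i then
    [c1 G i, c2 G i, c3 G i, c4 G i] ++ (if track G i then [c5 G i, c6 G i] else [])
  else []

def target (G : FRCCDGS T) : RCCDGS T :=
  ⟨(List.range (pairs G).length).flatMap (compFor G), G.start⟩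

lemma target_comps_mem {G : FRCCDGS T} {C : RCComponent T} (h : C ∈ (target G).comps) :
    ∃ i, i < (pairs G).length ∧ ok G i ∧
      (C = c1 G i ∨ C = c2 G i ∨ C = c3 G i ∨ C = c4 G i ∨
        (track G i ∧ (C = c5 G i ∨ C = c6 G i))) := by
  rcases List.mem_flatMap.mp h with ⟨i, hi, hC⟩
  refine ⟨i, List.mem_range.mp hi, ?_⟩
  by_cases hok : ok G i
  · refine ⟨hok, ?_⟩
    rw [compFor, if_pos hok] at hC
    rcases List.mem_append.mp hC with hC | hC
    · simp only [List.mem_cons, List.mem_singleton, List.not_mem_nil] at hC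
      tauto
    · by_cases htr : track G i
      · rw [if_pos htr] at hC
        simp only [List.mem_cons, List.mem_singleton, List.not_mem_nil] at hC
        tauto
      · rw [if_neg htr] at hC; cases hC
  · rw [compFor, if_neg hok] at hC; cases hC

lemma mem_target_comps {G : FRCCDGS T} {i : ℕ} (hi : i < (pairs G).length) (hok : ok G i) :
    ∀ C ∈ [c1 G i, c2 G i, c3 G i, c4 G i], C ∈ (target G).comps := by
  intro C hC
  exact List.mem_flatMap.mpr ⟨i, List.mem_range.mpr hi, by
    rw [compFor, if_pos hok]; exact List.mem_append_left _ hC⟩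

lemma mem_target_comps' {G : FRCCDGS T} {i : ℕ} (hi : i < (pairs G).length) (hok : ok G i)
    (htr : track G i) : ∀ C ∈ [c5 G i, c6 G i], C ∈ (target G).comps := by
  intro C hC
  exact List.mem_flatMap.mpr ⟨i, List.mem_range.mpr hi, by
    rw [compFor, if_pos hok, if_pos htr]; exact List.mem_append_right _ hC⟩


/-! ### Projection -/

def roleProj (G : FRCCDGS T) (i k : ℕ) : Word T :=
  if k = 0 then [Sum.inl (nA G i)]
  else if k = 3 ∨ k = 4 ∨ k = 5 then [Sum.inl (nB G i)]
  else rst G i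

def projS (G : FRCCDGS T) : Sym T → Word T
  | Sum.inr t => [Sum.inr t]
  | Sum.inl n =>
    if n < N0 G then [Sum.inl n]
    else if n < N0 G + 9 * (pairs G).length then roleProj G ((n - N0 G) / 9) ((n - N0 G) % 9)
    else [Sum.inl n]

def proj (G : FRCCDGS T) (w : Word T) : Word T := w.flatMap (projS G)

@[simp] lemma proj_nil (G : FRCCDGS T) : proj G ([] : Word T) = [] := rfl

@[simp] lemma proj_append (G : FRCCDGS T) (a b : Word T) :
    proj G (a ++ b) = proj G a ++ proj G b := by simp [proj]

@[simp] lemma proj_cons (G : FRCCDGS T) (s : Sym T) (a : Word T) :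
    proj G (s :: a) = projS G s ++ proj G a := by simp [proj]

lemma projS_low {G : FRCCDGS T} {n : ℕ} (h : n < N0 G) :
    projS G (Sum.inl n) = [Sum.inl n] := by simp [projS, h]

lemma projS_f {G : FRCCDGS T} {i k : ℕ} (hi : i < (pairs G).length) (hk : k < 9) :
    projS G (Sum.inl (f G i k)) = roleProj G i k := by
  have h1 : ¬ f G i k < N0 G := by simp only [f, not_lt]; omega
  have h2 : f G i k < N0 G + 9 * (pairs G).length := by simp [f]; omega
  have h3 : (f G i k - N0 G) / 9 = i := by simp [f]; omega
  have h4 : (f G i k - N0 G) % 9 = k := by simp [f]; omega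
  simp [projS, h1, h2, h3, h4]

lemma projS_f0 {G : FRCCDGS T} {i : ℕ} (hi : i < (pairs G).length) :
    projS G (Sum.inl (f G i 0)) = [Sum.inl (nA G i)] := by
  rw [projS_f hi (by omega)]; simp [roleProj]

lemma projS_fB {G : FRCCDGS T} {i k : ℕ} (hi : i < (pairs G).length)
    (hk : k = 3 ∨ k = 4 ∨ k = 5) :
    projS G (Sum.inl (f G i k)) = [Sum.inl (nB G i)] := by
  rw [projS_f hi (by omega)]
  rcases hk with rfl | rfl | rfl <;> simp [roleProj]

lemma projS_fR {G : FRCCDGS T} {i k : ℕ} (hi : i < (pairs G).length)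
    (hk : k = 1 ∨ k = 2 ∨ k = 6 ∨ k = 7 ∨ k = 8) :
    projS G (Sum.inl (f G i k)) = rst G i := by
  rw [projS_f hi (by omega)]
  have h0 : ¬ (k = 0) := by omega
  have h345 : ¬ (k = 3 ∨ k = 4 ∨ k = 5) := by omega
  simp [roleProj, h0, h345]

/-! ### Patterns -/

def pat (G : FRCCDGS T) (x : Word T) (l : List ℕ) : Prop :=
  ∀ n, N0 G ≤ n → cnt n x = l.count n

lemma pat_proj_id {G : FRCCDGS T} {x : Word T} (h : pat G x []) : proj G x = x := by
  induction x with
  | nil => rfl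
  | cons s a ih =>
    have ha : pat G a [] := by
      intro n hn
      have := h n hn
      simp at this ⊢
      omega
    cases s with
    | inr t => simp [projS, ih ha]
    | inl n =>
      have hlt : n < N0 G := by
        by_contra hge
        have := h n (le_of_not_gt hge)
        simp [List.count_nil] at this
      simp [projS_low hlt, ih ha]

lemma pat_mem {G : FRCCDGS T} {x : Word T} {l : List ℕ} (h : pat G x l) {n : ℕ}
    (hn : N0 G ≤ n) (hc : 0 < l.count n) : Sum.inl n ∈ x :=
  mem_of_cnt_pos (by rw [h n hn]; exact hc)

/-! ### Reachability and derivation pieces -/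

def ReachG (G : FRCCDGS T) (x : Word T) : Prop :=
  Relation.ReflTransGen (G.SysStep (.eq 2)) [Sum.inl G.start] x

def ReachH (G : FRCCDGS T) (x : Word T) : Prop :=
  Relation.ReflTransGen ((target G).SysStep (.eq 2)) [Sum.inl G.start] x

def ruleStep (r : FRCRule T) (u v : Word T) : Prop :=
  (∃ x z : Word T, u = x ++ [Sum.inl r.lhs] ++ z ∧ v = x ++ r.rhs ++ z) ∧
    ∀ A ∈ r.forb, Sum.inl A ∉ u

def Ecl (G : FRCCDGS T) (i : ℕ) (w : Word T) : Prop := ∀ A ∈ eE G i, Sum.inl A ∉ w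

def Half (G : FRCCDGS T) (i : ℕ) (w : Word T) : Prop :=
  ∃ u, ReachG G u ∧ ruleStep (pget G i).r1 u w

lemma half_step {G : FRCCDGS T} {i : ℕ} (hi : i < (pairs G).length) {w v : Word T}
    (hH : Half G i w) (h2 : ruleStep (pget G i).r2 w v) : ReachG G v := by
  obtain ⟨u, hu, h1⟩ := hH
  obtain ⟨hP, hr1, hr2⟩ := pairs_valid (pget_mem hi)
  refine hu.tail ⟨(pget G i).P, hP, ?_⟩
  show iter _ 2 u v
  exact iter_two.mpr ⟨w, ⟨(pget G i).r1, hr1, h1.1, h1.2⟩, ⟨(pget G i).r2, hr2, h2.1, h2.2⟩⟩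

/-! ### Generic rewrite lemmas -/

lemma rew_cnt {ℓ : ℕ} {ρ u v : Word T} (h : CFRule.Rewrites ⟨ℓ, ρ⟩ u v) (n : ℕ) :
    cnt n v + cnt n ([Sum.inl ℓ] : Word T) = cnt n u + cnt n ρ := by
  obtain ⟨a, b, rfl, rfl⟩ := h
  simp; ring

lemma rew_mem {ℓ : ℕ} {ρ u v : Word T} (h : CFRule.Rewrites ⟨ℓ, ρ⟩ u v) :
    Sum.inl ℓ ∈ u := by
  obtain ⟨a, b, rfl, rfl⟩ := h
  simp

lemma rew_proj {G : FRCCDGS T} {ℓ : ℕ} {ρ u v : Word T} (h : CFRule.Rewrites ⟨ℓ, ρ⟩ u v) :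
    ∃ a b, proj G u = a ++ projS G (Sum.inl ℓ) ++ b ∧ proj G v = a ++ proj G ρ ++ b := by
  obtain ⟨a, b, rfl, rfl⟩ := h
  exact ⟨proj G a, proj G b, by simp, by simp⟩

lemma pat_update {G : FRCCDGS T} {x y : Word T} {l l' : List ℕ} (hx : pat G x l)
    {ℓ : ℕ} {ρ : Word T} (h : CFRule.Rewrites ⟨ℓ, ρ⟩ x y)
    (hcnt : ∀ n, N0 G ≤ n →
      l'.count n + (if ℓ = n then 1 else 0) = l.count n + cnt n ρ) : pat G y l' := by
  intro n hn
  have e := rew_cnt h n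
  have e2 : cnt n ([Sum.inl ℓ] : Word T) = if ℓ = n then 1 else 0 := by
    simp [cnt_single]
  rw [e2, hx n hn] at e
  have := hcnt n hn
  omega

lemma cnt_low {G : FRCCDGS T} {ρ : Word T} (hρ : ∀ m, Sum.inl m ∈ ρ → m < N0 G)
    {n : ℕ} (hn : N0 G ≤ n) : cnt n ρ = 0 :=
  cnt_eq_zero fun hmem => absurd hn (not_le.mpr (hρ n hmem))


/-! ### Bounds for the pieces of pair `i` -/

section bounds
variable {G : FRCCDGS T} {i : ℕ}

lemma pv (hi : i < (pairs G).length) : (pget G i).P ∈ G.comps ∧ (pget G i).r1 ∈ (pget G i).P ∧ (pget G i).r2 ∈ (pget G i).P :=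
  pairs_valid (pget_mem hi)

lemma nA_lt (hi : i < (pairs G).length) : nA G i < N0 G := lhs_lt (pv hi).1 (pv hi).2.1
lemma nB_lt (hi : i < (pairs G).length) : nB G i < N0 G := lhs_lt (pv hi).1 (pv hi).2.2
lemma r1rhs_lt (hi : i < (pairs G).length) : ∀ n, Sum.inl n ∈ (pget G i).r1.rhs → n < N0 G := rhs_lt (pv hi).1 (pv hi).2.1
lemma zz_lt (hi : i < (pairs G).length) : ∀ n, Sum.inl n ∈ zz G i → n < N0 G := rhs_lt (pv hi).1 (pv hi).2.2
lemma rst_lt (hi : i < (pairs G).length) : ∀ n, Sum.inl n ∈ rst G i → n < N0 G := fun n hn =>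
  r1rhs_lt hi n (List.mem_of_mem_take hn)
lemma tl_lt (hi : i < (pairs G).length) : ∀ n, Sum.inl n ∈ tl G i → n < N0 G := fun n hn =>
  r1rhs_lt hi n (List.mem_of_mem_drop hn)

end bounds

lemma proj_id_of_lt {G : FRCCDGS T} {w : Word T} (h : ∀ n, Sum.inl n ∈ w → n < N0 G) :
    proj G w = w := by
  induction w with
  | nil => rfl
  | cons s a ih =>
    have ha : proj G a = a := ih fun n hn => h n (List.mem_cons_of_mem _ hn)
    cases s with
    | inr t => simp [projS, ha]
    | inl n => simp [projS_low (h n (List.mem_cons_self)), ha]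

lemma pat_proj_id' {G : FRCCDGS T} {x : Word T} (h : pat G x []) : proj G x = x := by
  refine proj_id_of_lt fun n hn => ?_
  by_contra hge
  have h0 := h n (le_of_not_gt hge)
  have h1 := cnt_pos_iff.mpr hn
  simp only [List.count_nil] at h0
  omega

lemma not_mem_of_pat {G : FRCCDGS T} {x : Word T} {l : List ℕ} (hpat : pat G x l) {n : ℕ}
    (hn : N0 G ≤ n) (h0 : l.count n = 0) : Sum.inl n ∉ x := by
  intro hmem
  have := cnt_pos_iff.mpr hmem
  rw [hpat n hn, h0] at this
  exact absurd this (by simp)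

lemma blocked {G : FRCCDGS T} {x : Word T} {l : List ℕ} (hpat : pat G x l)
    {C : RCComponent T} (hforb : ∀ A ∈ C.forb, Sum.inl A ∉ x) {g : ℕ} (hg : g ∈ C.forb)
    (hgN : N0 G ≤ g) (hl : 0 < l.count g) : False :=
  hforb g hg (pat_mem hpat hgN hl)

lemma cpos {a : ℕ} {l : List ℕ} (h : a ∈ l) : 0 < l.count a := List.count_pos_iff.mpr h

lemma step_impossible {G : FRCCDGS T} {x y : Word T} {l : List ℕ} (hpat : pat G x l)
    {ℓ : ℕ} {ρ : Word T} (h : CFRule.Rewrites ⟨ℓ, ρ⟩ x y) (hℓ : N0 G ≤ ℓ)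
    (h0 : l.count ℓ = 0) : False :=
  not_mem_of_pat hpat hℓ h0 (rew_mem h)

lemma rew_proj_eq {G : FRCCDGS T} {ℓ : ℕ} {ρ u v : Word T} (h : CFRule.Rewrites ⟨ℓ, ρ⟩ u v)
    (he : projS G (Sum.inl ℓ) = proj G ρ) : proj G u = proj G v := by
  obtain ⟨a, b, hu, hv⟩ := rew_proj (G := G) h
  rw [hu, hv, he]

/-! ### Membership of fresh symbols in the forbidding sets -/

section forbmem
variable {G : FRCCDGS T} {i k j : ℕ}

lemma f_in_c1 (hi : i < (pairs G).length) (hk : k < 9) : f G i k ∈ (c1 G j).forb :=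
  Finset.mem_union_right _ (f_mem_FreshSet hi hk)

lemma f_in_c2 (hi : i < (pairs G).length) (hk : k < 9) (h : ¬(i = j ∧ k = 1)) : f G i k ∈ (c2 G j).forb := by
  refine Finset.mem_union_right _ (Finset.mem_sdiff.mpr ⟨f_mem_FreshSet hi hk, ?_⟩)
  simp only [Finset.mem_singleton, f]
  omega

lemma f_in_c5 (hi : i < (pairs G).length) (hk : k < 9) (h : ¬(i = j ∧ k = 1)) : f G i k ∈ (c5 G j).forb := by
  refine Finset.mem_union_right _ (Finset.mem_sdiff.mpr ⟨f_mem_FreshSet hi hk, ?_⟩)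
  simp only [Finset.mem_singleton, f]
  omega

lemma f_in_c3 (hi : i < (pairs G).length) (hk : k < 9) (h : ¬(i = j ∧ (k = 3 ∨ k = 2))) : f G i k ∈ (c3 G j).forb := by
  refine Finset.mem_sdiff.mpr ⟨f_mem_FreshSet hi hk, ?_⟩
  simp only [Finset.mem_insert, Finset.mem_singleton, f]
  omega

lemma f_in_c4 (hi : i < (pairs G).length) (hk : k < 9) (h : ¬(i = j ∧ (k = 5 ∨ k = 2))) : f G i k ∈ (c4 G j).forb := by
  refine Finset.mem_sdiff.mpr ⟨f_mem_FreshSet hi hk, ?_⟩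
  simp only [Finset.mem_insert, Finset.mem_singleton, f]
  omega

lemma f_in_c6 (hi : i < (pairs G).length) (hk : k < 9) (h : ¬(i = j ∧ k = 7)) : f G i k ∈ (c6 G j).forb := by
  refine Finset.mem_sdiff.mpr ⟨f_mem_FreshSet hi hk, ?_⟩
  simp only [Finset.mem_singleton, f]
  omega

end forbmem

/-! ### Unpacking a step of the target system -/

lemma cfStep_pair {a b : CFRule T} {u v : Word T} (h : cfStep [a, b] u v) :
    a.Rewrites u v ∨ b.Rewrites u v := by
  obtain ⟨r, hr, hrw⟩ := h
  rcases List.mem_cons.mp hr with rfl | hr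
  · exact Or.inl hrw
  · rcases List.mem_singleton.mp hr with rfl
    exact Or.inr hrw

lemma sysstepH_elim {G : FRCCDGS T} {x x' : Word T} (h : (target G).SysStep (.eq 2) x x') :
    ∃ C ∈ (target G).comps,
      (∃ w, cfStep C.rules x w ∧ cfStep C.rules w x') ∧ ∀ A ∈ C.forb, Sum.inl A ∉ x := by
  obtain ⟨C, hC, hmode, _, hforb⟩ := h
  exact ⟨C, hC, iter_two.mp hmode, hforb⟩

/-! ### The invariant -/

def Inv (G : FRCCDGS T) (x : Word T) : Prop :=
  (pat G x [] ∧ ReachG G x) ∨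
  ∃ i, i < (pairs G).length ∧ ok G i ∧
    ((pat G x [f G i 1] ∧ Half G i (proj G x)) ∨
     (pat G x [f G i 3, f G i 2] ∧ Half G i (proj G x) ∧ Ecl G i (proj G x)) ∨
     (pat G x [f G i 5, f G i 2] ∧ Half G i (proj G x) ∧ Ecl G i (proj G x)) ∨
     (track G i ∧ pat G x [f G i 7] ∧ Half G i (proj G x) ∧ Ecl G i (proj G x)) ∨
     pat G x [f G i 0, f G i 0] ∨ pat G x [f G i 3, f G i 3] ∨
     pat G x [f G i 1, f G i 3, f G i 3] ∨ pat G x [f G i 4, f G i 4] ∨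
     pat G x [f G i 3, f G i 5])

lemma Ecl_S1 {G : FRCCDGS T} {i : ℕ} (hi : i < (pairs G).length) (hok : ok G i)
    {x : Word T} (hpat : pat G x [f G i 1]) (hE : ∀ A ∈ eE G i, Sum.inl A ∉ x) :
    Ecl G i (proj G x) := by
  intro A hA hmem
  rw [proj] at hmem
  obtain ⟨s, hs, hmem⟩ := List.mem_flatMap.mp hmem
  cases s with
  | inr t => simp [projS] at hmem
  | inl n =>
    by_cases hn : n < N0 G
    · rw [projS_low hn] at hmem
      rcases List.mem_singleton.mp hmem with h
      cases h
      exact hE A hA hs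
    · have hcnt : 0 < cnt n x := cnt_pos_iff.mpr hs
      rw [hpat n (le_of_not_gt hn)] at hcnt
      have : n = f G i 1 := by
        by_contra hne
        simp [List.count_cons, Ne.symm hne] at hcnt
      subst this
      rw [projS_fR hi (by omega)] at hmem
      exact hok A hA hmem


/-! ### Invariant constructors -/

section invcons
variable {G : FRCCDGS T} {x : Word T} {j : ℕ}

lemma invClean (h : pat G x []) (hr : ReachG G x) : Inv G x := Or.inl ⟨h, hr⟩

lemma invS1 (hj : j < (pairs G).length) (hok : ok G j) (h : pat G x [f G j 1])
    (hH : Half G j (proj G x)) : Inv G x :=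
  Or.inr ⟨j, hj, hok, Or.inl ⟨h, hH⟩⟩

lemma invS2 (hj : j < (pairs G).length) (hok : ok G j) (h : pat G x [f G j 3, f G j 2])
    (hH : Half G j (proj G x)) (hE : Ecl G j (proj G x)) : Inv G x :=
  Or.inr ⟨j, hj, hok, Or.inr (Or.inl ⟨h, hH, hE⟩)⟩

lemma invS3 (hj : j < (pairs G).length) (hok : ok G j) (h : pat G x [f G j 5, f G j 2])
    (hH : Half G j (proj G x)) (hE : Ecl G j (proj G x)) : Inv G x :=
  Or.inr ⟨j, hj, hok, Or.inr (Or.inr (Or.inl ⟨h, hH, hE⟩))⟩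

lemma invS4 (hj : j < (pairs G).length) (hok : ok G j) (htr : track G j)
    (h : pat G x [f G j 7]) (hH : Half G j (proj G x)) (hE : Ecl G j (proj G x)) : Inv G x :=
  Or.inr ⟨j, hj, hok, Or.inr (Or.inr (Or.inr (Or.inl ⟨htr, h, hH, hE⟩)))⟩

lemma invD1 (hj : j < (pairs G).length) (hok : ok G j) (h : pat G x [f G j 0, f G j 0]) :
    Inv G x := Or.inr ⟨j, hj, hok, Or.inr (Or.inr (Or.inr (Or.inr (Or.inl h))))⟩

lemma invD2 (hj : j < (pairs G).length) (hok : ok G j) (h : pat G x [f G j 3, f G j 3]) :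
    Inv G x := Or.inr ⟨j, hj, hok, Or.inr (Or.inr (Or.inr (Or.inr (Or.inr (Or.inl h)))))⟩

lemma invD3 (hj : j < (pairs G).length) (hok : ok G j)
    (h : pat G x [f G j 1, f G j 3, f G j 3]) : Inv G x :=
  Or.inr ⟨j, hj, hok, Or.inr (Or.inr (Or.inr (Or.inr (Or.inr (Or.inr (Or.inl h))))))⟩

lemma invD4 (hj : j < (pairs G).length) (hok : ok G j) (h : pat G x [f G j 4, f G j 4]) :
    Inv G x :=
  Or.inr ⟨j, hj, hok, Or.inr (Or.inr (Or.inr (Or.inr (Or.inr (Or.inr (Or.inr (Or.inl h)))))))⟩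

lemma invD5 (hj : j < (pairs G).length) (hok : ok G j) (h : pat G x [f G j 3, f G j 5]) :
    Inv G x :=
  Or.inr ⟨j, hj, hok, Or.inr (Or.inr (Or.inr (Or.inr (Or.inr (Or.inr (Or.inr (Or.inr h)))))))⟩

end invcons

/-! ### Soundness: the clean case -/

lemma inv_step_clean {G : FRCCDGS T} {x x' : Word T} (hpat : pat G x [])
    (hreach : ReachG G x) (h : (target G).SysStep (.eq 2) x x') : Inv G x' := by
  obtain ⟨C, hC, ⟨w, s1, s2⟩, hforb⟩ := sysstepH_elim h
  obtain ⟨j, hj, hokj, hrole⟩ := target_comps_mem hC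
  rcases hrole with rfl | rfl | rfl | rfl | ⟨htr, rfl | rfl⟩
  · -- c1
    rcases cfStep_pair s1 with h1 | h1
    · have hpw : pat G w [f G j 0] := by
        refine pat_update hpat h1 fun n hn => ?_
        have hA := nA_lt hj
        simp only [List.count_cons, List.count_nil, beq_iff_eq, cnt_single, Sum.inl.injEq, f]
        split_ifs <;> omega
      rcases cfStep_pair s2 with h2 | h2
      · refine invD1 hj hokj (pat_update hpw h2 fun n hn => ?_)
        have hA := nA_lt hj
        simp only [List.count_cons, List.count_nil, beq_iff_eq, cnt_single, Sum.inl.injEq, f]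
        split_ifs <;> omega
      · have hpx' : pat G x' [f G j 1] := by
          refine pat_update hpw h2 fun n hn => ?_
          have ht : cnt n (tl G j) = 0 := cnt_low (tl_lt hj) hn
          simp only [List.count_cons, List.count_nil, beq_iff_eq, cnt_cons, cnt_single,
            Sum.inl.injEq, ht, f]
          delta f; split_ifs <;> omega
        obtain ⟨a, b, hw, hx'⟩ := rew_proj (G := G) h2
        have hwx : proj G w = x := by
          rw [← pat_proj_id' hpat]
          exact (rew_proj_eq h1 (by rw [projS_low (nA_lt hj)]; simp [projS_f0 hj])).symm
        rw [hwx, projS_f0 hj] at hw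
        refine invS1 hj hokj hpx' ⟨x, hreach, ⟨a, b, hw, ?_⟩, ?_⟩
        · rw [hx']
          have : proj G (Sum.inl (f G j 1) :: tl G j) = (pget G j).r1.rhs := by
            rw [proj_cons, projS_fR hj (by omega), proj_id_of_lt (tl_lt hj)]
            exact List.take_append_drop 1 _
          rw [this]
        · exact fun A hA => hforb A (Finset.mem_union_left _ hA)
    · exact absurd (step_impossible hpat h1 (f_ge _ _) (by simp)) id
  · -- c2
    rcases cfStep_pair s1 with h1 | h1
    · have hpw : pat G w [f G j 3] := by
        refine pat_update hpat h1 fun n hn => ?_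
        have hB := nB_lt hj
        simp only [List.count_cons, List.count_nil, beq_iff_eq, cnt_single, Sum.inl.injEq, f]
        split_ifs <;> omega
      rcases cfStep_pair s2 with h2 | h2
      · refine invD2 hj hokj (pat_update hpw h2 fun n hn => ?_)
        have hB := nB_lt hj
        simp only [List.count_cons, List.count_nil, beq_iff_eq, cnt_single, Sum.inl.injEq, f]
        split_ifs <;> omega
      · exact absurd (step_impossible hpw h2 (f_ge _ _) (by
          simp only [List.count_cons, List.count_nil, beq_iff_eq, f]
          split_ifs <;> omega)) id
    · exact absurd (step_impossible hpat h1 (f_ge _ _) (by simp)) id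
  · -- c3
    rcases cfStep_pair s1 with h1 | h1 <;>
      exact absurd (step_impossible hpat h1 (f_ge _ _) (by simp)) id
  · -- c4
    rcases cfStep_pair s1 with h1 | h1 <;>
      exact absurd (step_impossible hpat h1 (f_ge _ _) (by simp)) id
  · -- c5
    rcases cfStep_pair s1 with h1 | h1 <;>
      exact absurd (step_impossible hpat h1 (f_ge _ _) (by simp)) id
  · -- c6
    rcases cfStep_pair s1 with h1 | h1 <;>
      exact absurd (step_impossible hpat h1 (f_ge _ _) (by simp)) id


/-! ### Projection-preservation equalities -/

section projeqs
variable {G : FRCCDGS T} {i : ℕ}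

lemma pe_B3 (hi : i < (pairs G).length) :
    projS G (Sum.inl (nB G i)) = proj G [Sum.inl (f G i 3)] := by
  rw [projS_low (nB_lt hi)]; simp [projS_fB hi (Or.inl rfl)]

lemma pe_12 (hi : i < (pairs G).length) :
    projS G (Sum.inl (f G i 1)) = proj G [Sum.inl (f G i 2)] := by
  rw [projS_fR hi (Or.inl rfl)]; simp [projS_fR hi (Or.inr (Or.inl rfl))]

lemma pe_16 (hi : i < (pairs G).length) :
    projS G (Sum.inl (f G i 1)) = proj G [Sum.inl (f G i 6)] := by
  rw [projS_fR hi (Or.inl rfl)]; simp [projS_fR hi (Or.inr (Or.inr (Or.inl rfl)))]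

lemma pe_67 (hi : i < (pairs G).length) :
    projS G (Sum.inl (f G i 6)) = proj G [Sum.inl (f G i 7)] := by
  rw [projS_fR hi (Or.inr (Or.inr (Or.inl rfl)))]
  simp [projS_fR hi (Or.inr (Or.inr (Or.inr (Or.inl rfl))))]

lemma pe_78 (hi : i < (pairs G).length) :
    projS G (Sum.inl (f G i 7)) = proj G [Sum.inl (f G i 8)] := by
  rw [projS_fR hi (Or.inr (Or.inr (Or.inr (Or.inl rfl))))]
  simp [projS_fR hi (Or.inr (Or.inr (Or.inr (Or.inr rfl))))]

lemma pe_34 (hi : i < (pairs G).length) :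
    projS G (Sum.inl (f G i 3)) = proj G [Sum.inl (f G i 4)] := by
  rw [projS_fB hi (Or.inl rfl)]; simp [projS_fB hi (Or.inr (Or.inl rfl))]

lemma pe_45 (hi : i < (pairs G).length) :
    projS G (Sum.inl (f G i 4)) = proj G [Sum.inl (f G i 5)] := by
  rw [projS_fB hi (Or.inr (Or.inl rfl))]; simp [projS_fB hi (Or.inr (Or.inr rfl))]

lemma pe_2r (hi : i < (pairs G).length) :
    projS G (Sum.inl (f G i 2)) = proj G (rst G i) := by
  rw [projS_fR hi (Or.inr (Or.inl rfl)), proj_id_of_lt (rst_lt hi)]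

end projeqs

/-! ### Soundness: the S1 case -/

lemma inv_step_S1 {G : FRCCDGS T} {x x' : Word T} {i : ℕ} (hi : i < (pairs G).length)
    (hok : ok G i) (hpat : pat G x [f G i 1]) (hH : Half G i (proj G x))
    (h : (target G).SysStep (.eq 2) x x') : Inv G x' := by
  obtain ⟨C, hC, ⟨w, s1, s2⟩, hforb⟩ := sysstepH_elim h
  obtain ⟨j, hj, hokj, hrole⟩ := target_comps_mem hC
  rcases hrole with rfl | rfl | rfl | rfl | ⟨htr, rfl | rfl⟩
  · exact (blocked hpat hforb (f_in_c1 (k := 1) hi (by omega)) (f_ge _ _) (cpos (by simp))).elim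
  · -- c2
    by_cases hij : i = j
    case neg =>
      exact (blocked hpat hforb (f_in_c2 (k := 1) hi (by omega) (by omega)) (f_ge _ _) (cpos (by simp))).elim
    subst hij
    have hE : ∀ A ∈ eE G i, Sum.inl A ∉ x := fun A hA => hforb A (Finset.mem_union_left _ hA)
    have hEcl := Ecl_S1 hi hok hpat hE
    rcases cfStep_pair s1 with h1 | h1
    · -- B → B̂
      have hpw : pat G w [f G i 3, f G i 1] := by
        refine pat_update hpat h1 fun n hn => ?_
        have hB := nB_lt hi
        simp only [List.count_cons, List.count_nil, beq_iff_eq, cnt_single, Sum.inl.injEq, f]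
        split_ifs <;> omega
      have hpjw : proj G w = proj G x := (rew_proj_eq h1 (pe_B3 hi)).symm
      rcases cfStep_pair s2 with h2 | h2
      · -- B → B̂ again: D3
        refine invD3 hi hok (pat_update hpw h2 fun n hn => ?_)
        have hB := nB_lt hi
        simp only [List.count_cons, List.count_nil, beq_iff_eq, cnt_single, Sum.inl.injEq, f]
        split_ifs <;> omega
      · -- ĉ → č : S2
        have hpx' : pat G x' [f G i 3, f G i 2] := by
          refine pat_update hpw h2 fun n hn => ?_
          simp only [List.count_cons, List.count_nil, beq_iff_eq, cnt_single, Sum.inl.injEq, f]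
          delta f; split_ifs <;> omega
        have hpjx' : proj G x' = proj G x := by
          rw [← (rew_proj_eq h2 (pe_12 hi)), hpjw]
        rw [← hpjx'] at hH hEcl
        exact invS2 hi hok hpx' hH hEcl
    · -- ĉ → č first
      have hpw : pat G w [f G i 2] := by
        refine pat_update hpat h1 fun n hn => ?_
        simp only [List.count_cons, List.count_nil, beq_iff_eq, cnt_single, Sum.inl.injEq, f]
        delta f; split_ifs <;> omega
      have hpjw : proj G w = proj G x := (rew_proj_eq h1 (pe_12 hi)).symm
      rcases cfStep_pair s2 with h2 | h2
      · -- B → B̂ : S2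
        have hpx' : pat G x' [f G i 3, f G i 2] := by
          refine pat_update hpw h2 fun n hn => ?_
          have hB := nB_lt hi
          simp only [List.count_cons, List.count_nil, beq_iff_eq, cnt_single, Sum.inl.injEq, f]
          split_ifs <;> omega
        have hpjx' : proj G x' = proj G x := by
          rw [← (rew_proj_eq h2 (pe_B3 hi)), hpjw]
        rw [← hpjx'] at hH hEcl
        exact invS2 hi hok hpx' hH hEcl
      · exact absurd (step_impossible hpw h2 (f_ge _ _) (by
          simp only [List.count_cons, List.count_nil, beq_iff_eq, f]
          split_ifs <;> omega)) id
  · exact (blocked hpat hforb (f_in_c3 (k := 1) hi (by omega) (by omega)) (f_ge _ _) (cpos (by simp))).elim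
  · exact (blocked hpat hforb (f_in_c4 (k := 1) hi (by omega) (by omega)) (f_ge _ _) (cpos (by simp))).elim
  · -- c5
    by_cases hij : i = j
    case neg =>
      exact (blocked hpat hforb (f_in_c5 (k := 1) hi (by omega) (by omega)) (f_ge _ _) (cpos (by simp))).elim
    subst hij
    have hE : ∀ A ∈ eE G i, Sum.inl A ∉ x := fun A hA => hforb A (Finset.mem_union_left _ hA)
    have hEcl := Ecl_S1 hi hok hpat hE
    rcases cfStep_pair s1 with h1 | h1
    · -- ĉ → Ď
      have hpw : pat G w [f G i 6] := by
        refine pat_update hpat h1 fun n hn => ?_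
        simp only [List.count_cons, List.count_nil, beq_iff_eq, cnt_single, Sum.inl.injEq, f]
        delta f; split_ifs <;> omega
      have hpjw : proj G w = proj G x := (rew_proj_eq h1 (pe_16 hi)).symm
      rcases cfStep_pair s2 with h2 | h2
      · exact absurd (step_impossible hpw h2 (f_ge _ _) (by
          simp only [List.count_cons, List.count_nil, beq_iff_eq, f]
          split_ifs <;> omega)) id
      · -- Ď → Ď' : S4
        have hpx' : pat G x' [f G i 7] := by
          refine pat_update hpw h2 fun n hn => ?_
          simp only [List.count_cons, List.count_nil, beq_iff_eq, cnt_single, Sum.inl.injEq, f]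
          delta f; split_ifs <;> omega
        have hpjx' : proj G x' = proj G x := by
          rw [← (rew_proj_eq h2 (pe_67 hi)), hpjw]
        rw [← hpjx'] at hH hEcl
        exact invS4 hi hok htr hpx' hH hEcl
    · exact absurd (step_impossible hpat h1 (f_ge _ _) (by
        simp only [List.count_cons, List.count_nil, beq_iff_eq, f]
        split_ifs <;> omega)) id
  · exact (blocked hpat hforb (f_in_c6 (k := 1) hi (by omega) (by omega)) (f_ge _ _) (cpos (by simp))).elim


/-! ### Soundness: the S2 case -/

lemma inv_step_S2 {G : FRCCDGS T} {x x' : Word T} {i : ℕ} (hi : i < (pairs G).length)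
    (hok : ok G i) (hpat : pat G x [f G i 3, f G i 2]) (hH : Half G i (proj G x))
    (hE : Ecl G i (proj G x)) (h : (target G).SysStep (.eq 2) x x') : Inv G x' := by
  obtain ⟨C, hC, ⟨w, s1, s2⟩, hforb⟩ := sysstepH_elim h
  obtain ⟨j, hj, hokj, hrole⟩ := target_comps_mem hC
  rcases hrole with rfl | rfl | rfl | rfl | ⟨htr, rfl | rfl⟩
  · exact (blocked hpat hforb (f_in_c1 (k := 3) hi (by omega)) (f_ge _ _) (cpos (by simp))).elim
  · exact (blocked hpat hforb (f_in_c2 (k := 3) hi (by omega) (by omega)) (f_ge _ _)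
      (cpos (by simp))).elim
  · -- c3
    by_cases hij : i = j
    case neg =>
      exact (blocked hpat hforb (f_in_c3 (k := 3) hi (by omega) (by omega)) (f_ge _ _)
        (cpos (by simp))).elim
    subst hij
    rcases cfStep_pair s1 with h1 | h1
    · have hpw : pat G w [f G i 4, f G i 2] := by
        refine pat_update hpat h1 fun n hn => ?_
        simp only [List.count_cons, List.count_nil, beq_iff_eq, cnt_single, Sum.inl.injEq, f]
        delta f; split_ifs <;> omega
      have hpjw : proj G w = proj G x := (rew_proj_eq h1 (pe_34 hi)).symm
      rcases cfStep_pair s2 with h2 | h2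
      · exact absurd (step_impossible hpw h2 (f_ge _ _) (by
          simp only [List.count_cons, List.count_nil, beq_iff_eq, f]
          split_ifs <;> omega)) id
      · have hpx' : pat G x' [f G i 5, f G i 2] := by
          refine pat_update hpw h2 fun n hn => ?_
          simp only [List.count_cons, List.count_nil, beq_iff_eq, cnt_single, Sum.inl.injEq, f]
          delta f; split_ifs <;> omega
        have hpjx' : proj G x' = proj G x := by
          rw [← (rew_proj_eq h2 (pe_45 hi)), hpjw]
        rw [← hpjx'] at hH hE
        exact invS3 hi hok hpx' hH hE
    · exact absurd (step_impossible hpat h1 (f_ge _ _) (by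
        simp only [List.count_cons, List.count_nil, beq_iff_eq, f]
        split_ifs <;> omega)) id
  · exact (blocked hpat hforb (f_in_c4 (k := 3) hi (by omega) (by omega)) (f_ge _ _)
      (cpos (by simp))).elim
  · exact (blocked hpat hforb (f_in_c5 (k := 3) hi (by omega) (by omega)) (f_ge _ _)
      (cpos (by simp))).elim
  · exact (blocked hpat hforb (f_in_c6 (k := 3) hi (by omega) (by omega)) (f_ge _ _)
      (cpos (by simp))).elim

/-! ### Soundness: the S3 case -/

lemma inv_step_S3 {G : FRCCDGS T} {x x' : Word T} {i : ℕ} (hi : i < (pairs G).length)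
    (hok : ok G i) (hpat : pat G x [f G i 5, f G i 2]) (hH : Half G i (proj G x))
    (hE : Ecl G i (proj G x)) (h : (target G).SysStep (.eq 2) x x') : Inv G x' := by
  obtain ⟨C, hC, ⟨w, s1, s2⟩, hforb⟩ := sysstepH_elim h
  obtain ⟨j, hj, hokj, hrole⟩ := target_comps_mem hC
  rcases hrole with rfl | rfl | rfl | rfl | ⟨htr, rfl | rfl⟩
  · exact (blocked hpat hforb (f_in_c1 (k := 5) hi (by omega)) (f_ge _ _) (cpos (by simp))).elim
  · exact (blocked hpat hforb (f_in_c2 (k := 5) hi (by omega) (by omega)) (f_ge _ _)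
      (cpos (by simp))).elim
  · exact (blocked hpat hforb (f_in_c3 (k := 5) hi (by omega) (by omega)) (f_ge _ _)
      (cpos (by simp))).elim
  · -- c4
    by_cases hij : i = j
    case neg =>
      exact (blocked hpat hforb (f_in_c4 (k := 5) hi (by omega) (by omega)) (f_ge _ _)
        (cpos (by simp))).elim
    subst hij
    rcases cfStep_pair s1 with h1 | h1
    · -- B₂ → z
      have hpw : pat G w [f G i 2] := by
        refine pat_update hpat h1 fun n hn => ?_
        have hz : cnt n (zz G i) = 0 := cnt_low (zz_lt hi) hn
        simp only [List.count_cons, List.count_nil, beq_iff_eq, hz, Sum.inl.injEq, f]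
        delta f; split_ifs <;> omega
      obtain ⟨a, b, hpx, hpw2⟩ := rew_proj (G := G) h1
      have hrs : ruleStep (pget G i).r2 (proj G x) (proj G w) :=
        ⟨⟨a, b, by rw [hpx, projS_fB hi (Or.inr (Or.inr rfl))]; rfl,
          by rw [hpw2, proj_id_of_lt (zz_lt hi)]; rfl⟩, hE⟩
      rcases cfStep_pair s2 with h2 | h2
      · exact absurd (step_impossible hpw h2 (f_ge _ _) (by
          simp only [List.count_cons, List.count_nil, beq_iff_eq, f]
          split_ifs <;> omega)) id
      · -- č → rest
        have hpx' : pat G x' [] := by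
          refine pat_update hpw h2 fun n hn => ?_
          have hr : cnt n (rst G i) = 0 := cnt_low (rst_lt hi) hn
          simp only [List.count_cons, List.count_nil, beq_iff_eq, hr, Sum.inl.injEq, f]
          delta f; split_ifs <;> omega
        have hpjx' : proj G x' = proj G w := (rew_proj_eq h2 (pe_2r hi)).symm
        have hreach : ReachG G (proj G x') := by
          rw [hpjx']
          exact half_step hi hH hrs
        rw [pat_proj_id' hpx'] at hreach
        exact invClean hpx' hreach
    · -- č → rest first
      have hpw : pat G w [f G i 5] := by
        refine pat_update hpat h1 fun n hn => ?_
        have hr : cnt n (rst G i) = 0 := cnt_low (rst_lt hi) hn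
        simp only [List.count_cons, List.count_nil, beq_iff_eq, hr, Sum.inl.injEq, f]
        delta f; split_ifs <;> omega
      have hpjw : proj G w = proj G x := (rew_proj_eq h1 (pe_2r hi)).symm
      rcases cfStep_pair s2 with h2 | h2
      · -- B₂ → z
        have hpx' : pat G x' [] := by
          refine pat_update hpw h2 fun n hn => ?_
          have hz : cnt n (zz G i) = 0 := cnt_low (zz_lt hi) hn
          simp only [List.count_cons, List.count_nil, beq_iff_eq, hz, Sum.inl.injEq, f]
          delta f; split_ifs <;> omega
        obtain ⟨a, b, hpw2, hpx2⟩ := rew_proj (G := G) h2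
        have hrs : ruleStep (pget G i).r2 (proj G w) (proj G x') :=
          ⟨⟨a, b, by rw [hpw2, projS_fB hi (Or.inr (Or.inr rfl))]; rfl,
            by rw [hpx2, proj_id_of_lt (zz_lt hi)]; rfl⟩, by rw [hpjw]; exact hE⟩
        rw [hpjw] at hrs
        have hreach : ReachG G (proj G x') := half_step hi hH hrs
        rw [pat_proj_id' hpx'] at hreach
        exact invClean hpx' hreach
      · exact absurd (step_impossible hpw h2 (f_ge _ _) (by
          simp only [List.count_cons, List.count_nil, beq_iff_eq, f]
          split_ifs <;> omega)) id
  · exact (blocked hpat hforb (f_in_c5 (k := 5) hi (by omega) (by omega)) (f_ge _ _)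
      (cpos (by simp))).elim
  · exact (blocked hpat hforb (f_in_c6 (k := 5) hi (by omega) (by omega)) (f_ge _ _)
      (cpos (by simp))).elim

/-! ### Soundness: the S4 case -/

lemma inv_step_S4 {G : FRCCDGS T} {x x' : Word T} {i : ℕ} (hi : i < (pairs G).length)
    (hok : ok G i) (htri : track G i) (hpat : pat G x [f G i 7]) (hH : Half G i (proj G x))
    (hE : Ecl G i (proj G x)) (h : (target G).SysStep (.eq 2) x x') : Inv G x' := by
  obtain ⟨C, hC, ⟨w, s1, s2⟩, hforb⟩ := sysstepH_elim h
  obtain ⟨j, hj, hokj, hrole⟩ := target_comps_mem hC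
  rcases hrole with rfl | rfl | rfl | rfl | ⟨htr, rfl | rfl⟩
  · exact (blocked hpat hforb (f_in_c1 (k := 7) hi (by omega)) (f_ge _ _) (cpos (by simp))).elim
  · exact (blocked hpat hforb (f_in_c2 (k := 7) hi (by omega) (by omega)) (f_ge _ _)
      (cpos (by simp))).elim
  · exact (blocked hpat hforb (f_in_c3 (k := 7) hi (by omega) (by omega)) (f_ge _ _)
      (cpos (by simp))).elim
  · exact (blocked hpat hforb (f_in_c4 (k := 7) hi (by omega) (by omega)) (f_ge _ _)
      (cpos (by simp))).elim
  · exact (blocked hpat hforb (f_in_c5 (k := 7) hi (by omega) (by omega)) (f_ge _ _)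
      (cpos (by simp))).elim
  · -- c6
    by_cases hij : i = j
    case neg =>
      exact (blocked hpat hforb (f_in_c6 (k := 7) hi (by omega) (by omega)) (f_ge _ _)
        (cpos (by simp))).elim
    subst hij
    rcases cfStep_pair s1 with h1 | h1
    · -- Ď' → Ď''
      have hpw : pat G w [f G i 8] := by
        refine pat_update hpat h1 fun n hn => ?_
        simp only [List.count_cons, List.count_nil, beq_iff_eq, cnt_single, Sum.inl.injEq, f]
        delta f; split_ifs <;> omega
      have hpjw : proj G w = proj G x := (rew_proj_eq h1 (pe_78 hi)).symm
      rcases cfStep_pair s2 with h2 | h2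
      · exact absurd (step_impossible hpw h2 (f_ge _ _) (by
          simp only [List.count_cons, List.count_nil, beq_iff_eq, f]
          split_ifs <;> omega)) id
      · -- Ď'' → z
        have hpx' : pat G x' [] := by
          refine pat_update hpw h2 fun n hn => ?_
          have hz : cnt n (zz G i) = 0 := cnt_low (zz_lt hi) hn
          simp only [List.count_cons, List.count_nil, beq_iff_eq, hz, Sum.inl.injEq, f]
          delta f; split_ifs <;> omega
        obtain ⟨a, b, hpw2, hpx2⟩ := rew_proj (G := G) h2
        rw [projS_fR hi (Or.inr (Or.inr (Or.inr (Or.inr rfl)))), htri] at hpw2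
        have hrs : ruleStep (pget G i).r2 (proj G w) (proj G x') :=
          ⟨⟨a, b, by rw [hpw2]; rfl, by rw [hpx2, proj_id_of_lt (zz_lt hi)]; rfl⟩, by rw [hpjw]; exact hE⟩
        rw [hpjw] at hrs
        have hreach : ReachG G (proj G x') := half_step hi hH hrs
        rw [pat_proj_id' hpx'] at hreach
        exact invClean hpx' hreach
    · exact absurd (step_impossible hpat h1 (f_ge _ _) (by
        simp only [List.count_cons, List.count_nil, beq_iff_eq, f]
        split_ifs <;> omega)) id

/-! ### Soundness: the doomed cases -/

lemma inv_step_D2 {G : FRCCDGS T} {x x' : Word T} {i : ℕ} (hi : i < (pairs G).length)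
    (hok : ok G i) (hpat : pat G x [f G i 3, f G i 3])
    (h : (target G).SysStep (.eq 2) x x') : Inv G x' := by
  obtain ⟨C, hC, ⟨w, s1, s2⟩, hforb⟩ := sysstepH_elim h
  obtain ⟨j, hj, hokj, hrole⟩ := target_comps_mem hC
  rcases hrole with rfl | rfl | rfl | rfl | ⟨htr, rfl | rfl⟩
  · exact (blocked hpat hforb (f_in_c1 (k := 3) hi (by omega)) (f_ge _ _) (cpos (by simp))).elim
  · exact (blocked hpat hforb (f_in_c2 (k := 3) hi (by omega) (by omega)) (f_ge _ _)
      (cpos (by simp))).elim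
  · -- c3
    by_cases hij : i = j
    case neg =>
      exact (blocked hpat hforb (f_in_c3 (k := 3) hi (by omega) (by omega)) (f_ge _ _)
        (cpos (by simp))).elim
    subst hij
    rcases cfStep_pair s1 with h1 | h1
    · have hpw : pat G w [f G i 4, f G i 3] := by
        refine pat_update hpat h1 fun n hn => ?_
        simp only [List.count_cons, List.count_nil, beq_iff_eq, cnt_single, Sum.inl.injEq, f]
        delta f; split_ifs <;> omega
      rcases cfStep_pair s2 with h2 | h2
      · refine invD4 hi hok (pat_update hpw h2 fun n hn => ?_)
        simp only [List.count_cons, List.count_nil, beq_iff_eq, cnt_single, Sum.inl.injEq, f]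
        delta f; split_ifs <;> omega
      · refine invD5 hi hok (pat_update hpw h2 fun n hn => ?_)
        simp only [List.count_cons, List.count_nil, beq_iff_eq, cnt_single, Sum.inl.injEq, f]
        delta f; split_ifs <;> omega
    · exact absurd (step_impossible hpat h1 (f_ge _ _) (by
        simp only [List.count_cons, List.count_nil, beq_iff_eq, f]
        split_ifs <;> omega)) id
  · exact (blocked hpat hforb (f_in_c4 (k := 3) hi (by omega) (by omega)) (f_ge _ _)
      (cpos (by simp))).elim
  · exact (blocked hpat hforb (f_in_c5 (k := 3) hi (by omega) (by omega)) (f_ge _ _)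
      (cpos (by simp))).elim
  · exact (blocked hpat hforb (f_in_c6 (k := 3) hi (by omega) (by omega)) (f_ge _ _)
      (cpos (by simp))).elim

lemma inv_step_D3 {G : FRCCDGS T} {x x' : Word T} {i : ℕ} (hi : i < (pairs G).length)
    (hpat : pat G x [f G i 1, f G i 3, f G i 3])
    (h : (target G).SysStep (.eq 2) x x') : False := by
  obtain ⟨C, hC, ⟨w, s1, s2⟩, hforb⟩ := sysstepH_elim h
  obtain ⟨j, hj, hokj, hrole⟩ := target_comps_mem hC
  rcases hrole with rfl | rfl | rfl | rfl | ⟨htr, rfl | rfl⟩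
  · exact blocked hpat hforb (f_in_c1 (k := 1) hi (by omega)) (f_ge _ _) (cpos (by simp))
  · exact blocked hpat hforb (f_in_c2 (k := 3) hi (by omega) (by omega)) (f_ge _ _)
      (cpos (by simp))
  · exact blocked hpat hforb (f_in_c3 (k := 1) hi (by omega) (by omega)) (f_ge _ _)
      (cpos (by simp))
  · exact blocked hpat hforb (f_in_c4 (k := 1) hi (by omega) (by omega)) (f_ge _ _)
      (cpos (by simp))
  · exact blocked hpat hforb (f_in_c5 (k := 3) hi (by omega) (by omega)) (f_ge _ _)
      (cpos (by simp))
  · exact blocked hpat hforb (f_in_c6 (k := 1) hi (by omega) (by omega)) (f_ge _ _)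
      (cpos (by simp))

lemma inv_step_D1 {G : FRCCDGS T} {x x' : Word T} {i : ℕ} (hi : i < (pairs G).length)
    (hpat : pat G x [f G i 0, f G i 0])
    (h : (target G).SysStep (.eq 2) x x') : False := by
  obtain ⟨C, hC, ⟨w, s1, s2⟩, hforb⟩ := sysstepH_elim h
  obtain ⟨j, hj, hokj, hrole⟩ := target_comps_mem hC
  rcases hrole with rfl | rfl | rfl | rfl | ⟨htr, rfl | rfl⟩
  · exact blocked hpat hforb (f_in_c1 (k := 0) hi (by omega)) (f_ge _ _) (cpos (by simp))
  · exact blocked hpat hforb (f_in_c2 (k := 0) hi (by omega) (by omega)) (f_ge _ _)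
      (cpos (by simp))
  · exact blocked hpat hforb (f_in_c3 (k := 0) hi (by omega) (by omega)) (f_ge _ _)
      (cpos (by simp))
  · exact blocked hpat hforb (f_in_c4 (k := 0) hi (by omega) (by omega)) (f_ge _ _)
      (cpos (by simp))
  · exact blocked hpat hforb (f_in_c5 (k := 0) hi (by omega) (by omega)) (f_ge _ _)
      (cpos (by simp))
  · exact blocked hpat hforb (f_in_c6 (k := 0) hi (by omega) (by omega)) (f_ge _ _)
      (cpos (by simp))

lemma inv_step_D4 {G : FRCCDGS T} {x x' : Word T} {i : ℕ} (hi : i < (pairs G).length)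
    (hpat : pat G x [f G i 4, f G i 4])
    (h : (target G).SysStep (.eq 2) x x') : False := by
  obtain ⟨C, hC, ⟨w, s1, s2⟩, hforb⟩ := sysstepH_elim h
  obtain ⟨j, hj, hokj, hrole⟩ := target_comps_mem hC
  rcases hrole with rfl | rfl | rfl | rfl | ⟨htr, rfl | rfl⟩
  · exact blocked hpat hforb (f_in_c1 (k := 4) hi (by omega)) (f_ge _ _) (cpos (by simp))
  · exact blocked hpat hforb (f_in_c2 (k := 4) hi (by omega) (by omega)) (f_ge _ _)
      (cpos (by simp))
  · exact blocked hpat hforb (f_in_c3 (k := 4) hi (by omega) (by omega)) (f_ge _ _)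
      (cpos (by simp))
  · exact blocked hpat hforb (f_in_c4 (k := 4) hi (by omega) (by omega)) (f_ge _ _)
      (cpos (by simp))
  · exact blocked hpat hforb (f_in_c5 (k := 4) hi (by omega) (by omega)) (f_ge _ _)
      (cpos (by simp))
  · exact blocked hpat hforb (f_in_c6 (k := 4) hi (by omega) (by omega)) (f_ge _ _)
      (cpos (by simp))

lemma inv_step_D5 {G : FRCCDGS T} {x x' : Word T} {i : ℕ} (hi : i < (pairs G).length)
    (hpat : pat G x [f G i 3, f G i 5])
    (h : (target G).SysStep (.eq 2) x x') : False := by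
  obtain ⟨C, hC, ⟨w, s1, s2⟩, hforb⟩ := sysstepH_elim h
  obtain ⟨j, hj, hokj, hrole⟩ := target_comps_mem hC
  rcases hrole with rfl | rfl | rfl | rfl | ⟨htr, rfl | rfl⟩
  · exact blocked hpat hforb (f_in_c1 (k := 3) hi (by omega)) (f_ge _ _) (cpos (by simp))
  · exact blocked hpat hforb (f_in_c2 (k := 3) hi (by omega) (by omega)) (f_ge _ _)
      (cpos (by simp))
  · exact blocked hpat hforb (f_in_c3 (k := 5) hi (by omega) (by omega)) (f_ge _ _)
      (cpos (by simp))
  · exact blocked hpat hforb (f_in_c4 (k := 3) hi (by omega) (by omega)) (f_ge _ _)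
      (cpos (by simp))
  · exact blocked hpat hforb (f_in_c5 (k := 3) hi (by omega) (by omega)) (f_ge _ _)
      (cpos (by simp))
  · exact blocked hpat hforb (f_in_c6 (k := 3) hi (by omega) (by omega)) (f_ge _ _)
      (cpos (by simp))

/-! ### Soundness: the main invariant preservation lemma -/

lemma inv_step {G : FRCCDGS T} {x x' : Word T} (hI : Inv G x)
    (h : (target G).SysStep (.eq 2) x x') : Inv G x' := by
  rcases hI with ⟨hpat, hreach⟩ | ⟨i, hi, hok, hcase⟩
  · exact inv_step_clean hpat hreach h
  rcases hcase with ⟨hpat, hH⟩ | ⟨hpat, hH, hE⟩ | ⟨hpat, hH, hE⟩ | ⟨htr, hpat, hH, hE⟩ |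
    hpat | hpat | hpat | hpat | hpat
  · exact inv_step_S1 hi hok hpat hH h
  · exact inv_step_S2 hi hok hpat hH hE h
  · exact inv_step_S3 hi hok hpat hH hE h
  · exact inv_step_S4 hi hok htr hpat hH hE h
  · exact (inv_step_D1 hi hpat h).elim
  · exact inv_step_D2 hi hok hpat h
  · exact (inv_step_D3 hi hpat h).elim
  · exact (inv_step_D4 hi hpat h).elim
  · exact (inv_step_D5 hi hpat h).elim


/-! ### Completeness infrastructure -/

lemma split_single {l1 l2 a b : Word T} {s : Sym T} (h : l1 ++ l2 = a ++ [s] ++ b) :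
    (∃ e, l1 = a ++ [s] ++ e ∧ b = e ++ l2) ∨ (∃ e, l2 = e ++ [s] ++ b ∧ a = l1 ++ e) := by
  rw [List.append_assoc] at h
  rcases List.append_eq_append_iff.mp h with ⟨a', ha, hb⟩ | ⟨c', hc, hd⟩
  · exact Or.inr ⟨a', by rw [hb, ← List.append_assoc], ha⟩
  · cases c' with
    | nil => exact Or.inr ⟨[], by simpa using hd.symm, by simp [hc]⟩
    | cons s' t =>
      have hs : s' = s ∧ t ++ l2 = b := by
        have h' := hd
        simp only [List.cons_append] at h'
        injection h' with h1 h2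
        exact ⟨h1.symm, by simpa using h2.symm⟩
      obtain ⟨rfl, hb⟩ := hs
      exact Or.inl ⟨t, by rw [hc]; simp, hb.symm⟩

lemma frcStep_pat {G : FRCCDGS T} {P : List (FRCRule T)} (hP : P ∈ G.comps) {u v : Word T}
    (hu : pat G u []) (h : frcStep P u v) : pat G v [] := by
  obtain ⟨r, hr, ⟨a, b, rfl, rfl⟩, -⟩ := h
  intro n hn
  have h1 := hu n hn
  have h2 : cnt n r.rhs = 0 := cnt_low (rhs_lt hP hr) hn
  simp only [cnt_append, List.count_nil] at h1 ⊢
  simp [h2]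
  omega

lemma sysG_pat {G : FRCCDGS T} {u v : Word T} (hu : pat G u [])
    (h : G.SysStep (.eq 2) u v) : pat G v [] := by
  obtain ⟨P, hP, hmode⟩ := h
  obtain ⟨w, h1, h2⟩ := iter_two.mp hmode
  exact frcStep_pat hP (frcStep_pat hP hu h1) h2

lemma reachG_pat {G : FRCCDGS T} {v : Word T} (h : ReachG G v) : pat G v [] := by
  induction h with
  | refl =>
    intro n hn
    have := start_lt_N0 G
    simp only [cnt_cons, cnt_nil, List.count_nil, Sum.inl.injEq]
    split_ifs <;> omega
  | tail _ hstep ih => exact sysG_pat ih hstep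

lemma not_mem_piece {G : FRCCDGS T} {P1 : Word T} (hP : ∀ n, N0 G ≤ n → cnt n P1 = 0)
    {A : ℕ} (hA : N0 G ≤ A) : Sum.inl A ∉ P1 := fun hm => by
  have h1 := cnt_pos_iff.mpr hm
  rw [hP A hA] at h1
  exact absurd h1 (by simp)

lemma eE_lt {G : FRCCDGS T} {i : ℕ} (hi : i < (pairs G).length) :
    ∀ A ∈ eE G i, A < N0 G := forb_lt (pv hi).1 (pv hi).2.2

lemma eF_lt {G : FRCCDGS T} {i : ℕ} (hi : i < (pairs G).length) :
    ∀ A ∈ eF G i, A < N0 G := forb_lt (pv hi).1 (pv hi).2.1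

lemma mkVisit {G : FRCCDGS T} {C : RCComponent T} (hC : C ∈ (target G).comps)
    (hperm : C.perm = ∅) {x y z : Word T} (h1 : cfStep C.rules x y) (h2 : cfStep C.rules y z)
    (hforb : ∀ A ∈ C.forb, Sum.inl A ∉ x) : (target G).SysStep (.eq 2) x z :=
  ⟨C, hC, ⟨iter_two.mpr ⟨y, h1, h2⟩, by simp [hperm], hforb⟩⟩

lemma mkStep {rules : List (CFRule T)} {r : CFRule T} (hr : r ∈ rules) {x y : Word T}
    (hrw : r.Rewrites x y) : cfStep rules x y := ⟨r, hr, hrw⟩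


/-! ### Completeness: the four visits -/

lemma visit1 {G : FRCCDGS T} {i : ℕ} (hi : i < (pairs G).length) (hok : ok G i)
    {p q : Word T}
    (hcp : ∀ n, N0 G ≤ n → cnt n p = 0) (hcq : ∀ n, N0 G ≤ n → cnt n q = 0)
    (hF : ∀ A ∈ eF G i, Sum.inl A ∉ p ++ [Sum.inl (nA G i)] ++ q) :
    (target G).SysStep (.eq 2) (p ++ [Sum.inl (nA G i)] ++ q)
      (p ++ [Sum.inl (f G i 1)] ++ tl G i ++ q) := by
  refine mkVisit (y := p ++ [Sum.inl (f G i 0)] ++ q)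
    (mem_target_comps hi hok (c1 G i) (by simp)) rfl
    (mkStep (r := ⟨nA G i, [Sum.inl (f G i 0)]⟩) (by simp [c1]) ⟨p, q, by simp, by simp⟩)
    (mkStep (r := ⟨f G i 0, Sum.inl (f G i 1) :: tl G i⟩) (by simp [c1])
      ⟨p, q, by simp, by simp⟩) ?_
  intro A hA
  rcases Finset.mem_union.mp hA with hA | hA
  · exact hF A hA
  · have hge : N0 G ≤ A := (Finset.mem_Ico.mp hA).1
    have hAa : nA G i < N0 G := nA_lt hi
    intro hmem
    have hpos := cnt_pos_iff.mpr hmem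
    simp only [cnt_append, cnt_single, Sum.inl.injEq, hcp A hge, hcq A hge] at hpos
    split_ifs at hpos <;> omega

lemma chain1 {G : FRCCDGS T} {i : ℕ} (hi : i < (pairs G).length) (hok : ok G i)
    {P1 P2 P3 : Word T}
    (hc1 : ∀ n, N0 G ≤ n → cnt n P1 = 0) (hc2 : ∀ n, N0 G ≤ n → cnt n P2 = 0)
    (hc3 : ∀ n, N0 G ≤ n → cnt n P3 = 0)
    (hEw : ∀ A ∈ eE G i, Sum.inl A ∉ P1 ++ [Sum.inl (nB G i)] ++ P2 ++ rst G i ++ P3) :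
    Relation.ReflTransGen ((target G).SysStep (.eq 2))
      (P1 ++ [Sum.inl (nB G i)] ++ P2 ++ [Sum.inl (f G i 1)] ++ P3)
      (P1 ++ zz G i ++ P2 ++ rst G i ++ P3) := by
  have hBlt : nB G i < N0 G := nB_lt hi
  refine Relation.ReflTransGen.head
    (b := P1 ++ [Sum.inl (f G i 3)] ++ P2 ++ [Sum.inl (f G i 2)] ++ P3) ?_
    (Relation.ReflTransGen.head
      (b := P1 ++ [Sum.inl (f G i 5)] ++ P2 ++ [Sum.inl (f G i 2)] ++ P3) ?_
      (Relation.ReflTransGen.head ?_ Relation.ReflTransGen.refl))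
  · -- visit c2
    refine mkVisit (y := P1 ++ [Sum.inl (f G i 3)] ++ P2 ++ [Sum.inl (f G i 1)] ++ P3)
      (mem_target_comps hi hok (c2 G i) (by simp)) rfl
      (mkStep (r := ⟨nB G i, [Sum.inl (f G i 3)]⟩) (by simp [c2])
        ⟨P1, P2 ++ [Sum.inl (f G i 1)] ++ P3, by simp, by simp⟩)
      (mkStep (r := ⟨f G i 1, [Sum.inl (f G i 2)]⟩) (by simp [c2])
        ⟨P1 ++ [Sum.inl (f G i 3)] ++ P2, P3, by simp, by simp⟩) ?_
    intro A hA
    rcases Finset.mem_union.mp hA with hA | hA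
    · have hAlt : A < N0 G := eE_lt hi A hA
      intro hmem
      have hpos := cnt_pos_iff.mpr hmem
      have hw0 : cnt A (P1 ++ [Sum.inl (nB G i)] ++ P2 ++ rst G i ++ P3) = 0 :=
        cnt_eq_zero (hEw A hA)
      simp only [cnt_append, cnt_single, Sum.inl.injEq, f] at hpos hw0
      split_ifs at hpos hw0 <;> omega
    · obtain ⟨hA1, hA2⟩ := Finset.mem_sdiff.mp hA
      have hge : N0 G ≤ A := (Finset.mem_Ico.mp hA1).1
      simp only [Finset.mem_singleton] at hA2
      intro hmem
      have hpos := cnt_pos_iff.mpr hmem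
      simp only [cnt_append, cnt_single, Sum.inl.injEq, hc1 A hge, hc2 A hge,
        hc3 A hge] at hpos
      simp only [f] at hpos hA2
      delta f at hpos; split_ifs at hpos <;> omega
  · -- visit c3
    refine mkVisit (y := P1 ++ [Sum.inl (f G i 4)] ++ P2 ++ [Sum.inl (f G i 2)] ++ P3)
      (mem_target_comps hi hok (c3 G i) (by simp)) rfl
      (mkStep (r := ⟨f G i 3, [Sum.inl (f G i 4)]⟩) (by simp [c3])
        ⟨P1, P2 ++ [Sum.inl (f G i 2)] ++ P3, by simp, by simp⟩)
      (mkStep (r := ⟨f G i 4, [Sum.inl (f G i 5)]⟩) (by simp [c3])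
        ⟨P1, P2 ++ [Sum.inl (f G i 2)] ++ P3, by simp, by simp⟩) ?_
    intro A hA
    obtain ⟨hA1, hA2⟩ := Finset.mem_sdiff.mp hA
    have hge : N0 G ≤ A := (Finset.mem_Ico.mp hA1).1
    simp only [Finset.mem_insert, Finset.mem_singleton, not_or] at hA2
    intro hmem
    have hpos := cnt_pos_iff.mpr hmem
    simp only [cnt_append, cnt_single, Sum.inl.injEq, hc1 A hge, hc2 A hge,
      hc3 A hge] at hpos
    obtain ⟨hA2a, hA2b⟩ := hA2
    simp only [f] at hpos hA2a hA2b
    delta f at hpos; split_ifs at hpos <;> omega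
  · -- visit c4
    refine mkVisit (y := P1 ++ zz G i ++ P2 ++ [Sum.inl (f G i 2)] ++ P3)
      (mem_target_comps hi hok (c4 G i) (by simp)) rfl
      (mkStep (r := ⟨f G i 5, zz G i⟩) (by simp [c4])
        ⟨P1, P2 ++ [Sum.inl (f G i 2)] ++ P3, by simp, by simp⟩)
      (mkStep (r := ⟨f G i 2, rst G i⟩) (by simp [c4])
        ⟨P1 ++ zz G i ++ P2, P3, by simp, by simp⟩) ?_
    intro A hA
    obtain ⟨hA1, hA2⟩ := Finset.mem_sdiff.mp hA
    have hge : N0 G ≤ A := (Finset.mem_Ico.mp hA1).1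
    simp only [Finset.mem_insert, Finset.mem_singleton, not_or] at hA2
    intro hmem
    have hpos := cnt_pos_iff.mpr hmem
    simp only [cnt_append, cnt_single, Sum.inl.injEq, hc1 A hge, hc2 A hge,
      hc3 A hge] at hpos
    obtain ⟨hA2a, hA2b⟩ := hA2
    simp only [f] at hpos hA2a hA2b
    delta f at hpos; split_ifs at hpos <;> omega


lemma chain2 {G : FRCCDGS T} {i : ℕ} (hi : i < (pairs G).length) (hok : ok G i)
    {P1 P2 P3 : Word T}
    (hc1 : ∀ n, N0 G ≤ n → cnt n P1 = 0) (hc2 : ∀ n, N0 G ≤ n → cnt n P2 = 0)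
    (hc3 : ∀ n, N0 G ≤ n → cnt n P3 = 0)
    (hEw : ∀ A ∈ eE G i, Sum.inl A ∉ P1 ++ rst G i ++ P2 ++ [Sum.inl (nB G i)] ++ P3) :
    Relation.ReflTransGen ((target G).SysStep (.eq 2))
      (P1 ++ [Sum.inl (f G i 1)] ++ P2 ++ [Sum.inl (nB G i)] ++ P3)
      (P1 ++ rst G i ++ P2 ++ zz G i ++ P3) := by
  have hBlt : nB G i < N0 G := nB_lt hi
  refine Relation.ReflTransGen.head
    (b := P1 ++ [Sum.inl (f G i 2)] ++ P2 ++ [Sum.inl (f G i 3)] ++ P3) ?_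
    (Relation.ReflTransGen.head
      (b := P1 ++ [Sum.inl (f G i 2)] ++ P2 ++ [Sum.inl (f G i 5)] ++ P3) ?_
      (Relation.ReflTransGen.head ?_ Relation.ReflTransGen.refl))
  · -- visit c2
    refine mkVisit (y := P1 ++ [Sum.inl (f G i 1)] ++ P2 ++ [Sum.inl (f G i 3)] ++ P3)
      (mem_target_comps hi hok (c2 G i) (by simp)) rfl
      (mkStep (r := ⟨nB G i, [Sum.inl (f G i 3)]⟩) (by simp [c2])
        ⟨P1 ++ [Sum.inl (f G i 1)] ++ P2, P3, by simp, by simp⟩)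
      (mkStep (r := ⟨f G i 1, [Sum.inl (f G i 2)]⟩) (by simp [c2])
        ⟨P1, P2 ++ [Sum.inl (f G i 3)] ++ P3, by simp, by simp⟩) ?_
    intro A hA
    rcases Finset.mem_union.mp hA with hA | hA
    · have hAlt : A < N0 G := eE_lt hi A hA
      intro hmem
      have hpos := cnt_pos_iff.mpr hmem
      have hw0 : cnt A (P1 ++ rst G i ++ P2 ++ [Sum.inl (nB G i)] ++ P3) = 0 :=
        cnt_eq_zero (hEw A hA)
      simp only [cnt_append, cnt_single, Sum.inl.injEq, f] at hpos hw0
      split_ifs at hpos hw0 <;> omega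
    · obtain ⟨hA1, hA2⟩ := Finset.mem_sdiff.mp hA
      have hge : N0 G ≤ A := (Finset.mem_Ico.mp hA1).1
      simp only [Finset.mem_singleton] at hA2
      intro hmem
      have hpos := cnt_pos_iff.mpr hmem
      simp only [cnt_append, cnt_single, Sum.inl.injEq, hc1 A hge, hc2 A hge,
        hc3 A hge] at hpos
      simp only [f] at hpos hA2
      delta f at hpos; split_ifs at hpos <;> omega
  · -- visit c3
    refine mkVisit (y := P1 ++ [Sum.inl (f G i 2)] ++ P2 ++ [Sum.inl (f G i 4)] ++ P3)
      (mem_target_comps hi hok (c3 G i) (by simp)) rfl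
      (mkStep (r := ⟨f G i 3, [Sum.inl (f G i 4)]⟩) (by simp [c3])
        ⟨P1 ++ [Sum.inl (f G i 2)] ++ P2, P3, by simp, by simp⟩)
      (mkStep (r := ⟨f G i 4, [Sum.inl (f G i 5)]⟩) (by simp [c3])
        ⟨P1 ++ [Sum.inl (f G i 2)] ++ P2, P3, by simp, by simp⟩) ?_
    intro A hA
    obtain ⟨hA1, hA2⟩ := Finset.mem_sdiff.mp hA
    have hge : N0 G ≤ A := (Finset.mem_Ico.mp hA1).1
    simp only [Finset.mem_insert, Finset.mem_singleton, not_or] at hA2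
    intro hmem
    have hpos := cnt_pos_iff.mpr hmem
    simp only [cnt_append, cnt_single, Sum.inl.injEq, hc1 A hge, hc2 A hge,
      hc3 A hge] at hpos
    obtain ⟨hA2a, hA2b⟩ := hA2
    simp only [f] at hpos hA2a hA2b
    delta f at hpos; split_ifs at hpos <;> omega
  · -- visit c4
    refine mkVisit (y := P1 ++ [Sum.inl (f G i 2)] ++ P2 ++ zz G i ++ P3)
      (mem_target_comps hi hok (c4 G i) (by simp)) rfl
      (mkStep (r := ⟨f G i 5, zz G i⟩) (by simp [c4])
        ⟨P1 ++ [Sum.inl (f G i 2)] ++ P2, P3, by simp, by simp⟩)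
      (mkStep (r := ⟨f G i 2, rst G i⟩) (by simp [c4])
        ⟨P1, P2 ++ zz G i ++ P3, by simp, by simp⟩) ?_
    intro A hA
    obtain ⟨hA1, hA2⟩ := Finset.mem_sdiff.mp hA
    have hge : N0 G ≤ A := (Finset.mem_Ico.mp hA1).1
    simp only [Finset.mem_insert, Finset.mem_singleton, not_or] at hA2
    intro hmem
    have hpos := cnt_pos_iff.mpr hmem
    simp only [cnt_append, cnt_single, Sum.inl.injEq, hc1 A hge, hc2 A hge,
      hc3 A hge] at hpos
    obtain ⟨hA2a, hA2b⟩ := hA2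
    simp only [f] at hpos hA2a hA2b
    delta f at hpos; split_ifs at hpos <;> omega

lemma chain3 {G : FRCCDGS T} {i : ℕ} (hi : i < (pairs G).length) (hok : ok G i)
    (htr : track G i) {P1 P3 : Word T}
    (hc1 : ∀ n, N0 G ≤ n → cnt n P1 = 0) (hc3 : ∀ n, N0 G ≤ n → cnt n P3 = 0)
    (hEw : ∀ A ∈ eE G i, Sum.inl A ∉ P1 ++ [Sum.inl (nB G i)] ++ P3) :
    Relation.ReflTransGen ((target G).SysStep (.eq 2))
      (P1 ++ [Sum.inl (f G i 1)] ++ P3) (P1 ++ zz G i ++ P3) := by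
  have hBlt : nB G i < N0 G := nB_lt hi
  refine Relation.ReflTransGen.head
    (b := P1 ++ [Sum.inl (f G i 7)] ++ P3) ?_
    (Relation.ReflTransGen.head ?_ Relation.ReflTransGen.refl)
  · -- visit c5
    refine mkVisit (y := P1 ++ [Sum.inl (f G i 6)] ++ P3)
      (mem_target_comps' hi hok htr (c5 G i) (by simp)) rfl
      (mkStep (r := ⟨f G i 1, [Sum.inl (f G i 6)]⟩) (by simp [c5])
        ⟨P1, P3, by simp, by simp⟩)
      (mkStep (r := ⟨f G i 6, [Sum.inl (f G i 7)]⟩) (by simp [c5])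
        ⟨P1, P3, by simp, by simp⟩) ?_
    intro A hA
    rcases Finset.mem_union.mp hA with hA | hA
    · have hAlt : A < N0 G := eE_lt hi A hA
      intro hmem
      have hpos := cnt_pos_iff.mpr hmem
      have hw0 : cnt A (P1 ++ [Sum.inl (nB G i)] ++ P3) = 0 := cnt_eq_zero (hEw A hA)
      simp only [cnt_append, cnt_single, Sum.inl.injEq, f] at hpos hw0
      split_ifs at hpos hw0 <;> omega
    · obtain ⟨hA1, hA2⟩ := Finset.mem_sdiff.mp hA
      have hge : N0 G ≤ A := (Finset.mem_Ico.mp hA1).1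
      simp only [Finset.mem_singleton] at hA2
      intro hmem
      have hpos := cnt_pos_iff.mpr hmem
      simp only [cnt_append, cnt_single, Sum.inl.injEq, hc1 A hge, hc3 A hge] at hpos
      simp only [f] at hpos hA2
      delta f at hpos; split_ifs at hpos <;> omega
  · -- visit c6
    refine mkVisit (y := P1 ++ [Sum.inl (f G i 8)] ++ P3)
      (mem_target_comps' hi hok htr (c6 G i) (by simp)) rfl
      (mkStep (r := ⟨f G i 7, [Sum.inl (f G i 8)]⟩) (by simp [c6])
        ⟨P1, P3, by simp, by simp⟩)
      (mkStep (r := ⟨f G i 8, zz G i⟩) (by simp [c6])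
        ⟨P1, P3, by simp, by simp⟩) ?_
    intro A hA
    obtain ⟨hA1, hA2⟩ := Finset.mem_sdiff.mp hA
    have hge : N0 G ≤ A := (Finset.mem_Ico.mp hA1).1
    simp only [Finset.mem_singleton] at hA2
    intro hmem
    have hpos := cnt_pos_iff.mpr hmem
    simp only [cnt_append, cnt_single, Sum.inl.injEq, hc1 A hge, hc3 A hge] at hpos
    simp only [f] at hpos hA2
    delta f at hpos; split_ifs at hpos <;> omega


/-! ### Completeness: main step lemma -/

lemma complete_step {G : FRCCDGS T} {u v : Word T} (hu : pat G u [])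
    (h : G.SysStep (.eq 2) u v) :
    Relation.ReflTransGen ((target G).SysStep (.eq 2)) u v := by
  obtain ⟨P, hP, hmode⟩ := h
  obtain ⟨w, h1, h2⟩ := iter_two.mp hmode
  obtain ⟨r1, hr1, ⟨p, q, rfl, hw⟩, hF⟩ := h1
  obtain ⟨r2, hr2, ⟨a, b, hw2, rfl⟩, hE⟩ := h2
  obtain ⟨i, hi, hpg⟩ : ∃ i, i < (pairs G).length ∧ pget G i = ⟨P, r1, r2⟩ := by
    have hm := mem_pairs hP hr1 hr2
    obtain ⟨i, hi, he⟩ := List.mem_iff_getElem.mp hm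
    exact ⟨i, hi, by rw [pget, List.getD_eq_getElem _ _ hi, he]⟩
  have hA : nA G i = r1.lhs := by rw [nA, hpg]
  have hB : nB G i = r2.lhs := by rw [nB, hpg]
  have hEe : eE G i = r2.forb := by rw [eE, hpg]
  have hFf : eF G i = r1.forb := by rw [eF, hpg]
  have hrt : rst G i ++ tl G i = r1.rhs := by
    rw [rst, tl, hpg]; exact List.take_append_drop 1 _
  have hz : zz G i = r2.rhs := by rw [zz, hpg]
  have hrhs0 : ∀ n, N0 G ≤ n → cnt n r1.rhs = 0 := fun n hn => cnt_low (rhs_lt hP hr1) hn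
  have htl0 : ∀ n, N0 G ≤ n → cnt n (tl G i) = 0 := fun n hn => cnt_low (tl_lt hi) hn
  have hok : ok G i := by
    intro e he hmem
    refine hE e (hEe ▸ he) ?_
    have hmem' : Sum.inl e ∈ r1.rhs := by
      rw [← hrt]; exact List.mem_append_left _ hmem
    rw [hw]
    simp only [List.mem_append]
    tauto
  have hcp : ∀ n, N0 G ≤ n → cnt n p = 0 := fun n hn => by
    have h0 := hu n hn
    simp only [cnt_append, List.count_nil] at h0 ⊢
    omega
  have hcq : ∀ n, N0 G ≤ n → cnt n q = 0 := fun n hn => by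
    have h0 := hu n hn
    simp only [cnt_append, List.count_nil] at h0 ⊢
    omega
  have hF' : ∀ A ∈ eF G i, Sum.inl A ∉ p ++ [Sum.inl (nA G i)] ++ q := by
    rw [hA, hFf]; exact hF
  have hv1 := visit1 hi hok hcp hcq hF'
  rw [← hA]
  refine Relation.ReflTransGen.head hv1 ?_
  -- now locate the occurrence of r2.lhs in w
  have hsplit0 : p ++ (r1.rhs ++ q) = a ++ [Sum.inl r2.lhs] ++ b := by
    rw [← List.append_assoc, ← hw, hw2]
  rcases split_single hsplit0 with ⟨e, hp, hb⟩ | ⟨e, h2nd, ha⟩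
  · -- B inside p
    have hca : ∀ n, N0 G ≤ n → cnt n a = 0 := fun n hn => by
      have h0 := hcp n hn
      rw [hp] at h0
      simp only [cnt_append, List.count_nil] at h0 ⊢
      omega
    have hce : ∀ n, N0 G ≤ n → cnt n e = 0 := fun n hn => by
      have h0 := hcp n hn
      rw [hp] at h0
      simp only [cnt_append, List.count_nil] at h0 ⊢
      omega
    have hc3 : ∀ n, N0 G ≤ n → cnt n (tl G i ++ q) = 0 := fun n hn => by
      have h0 := htl0 n hn
      have h0' := hcq n hn
      simp only [cnt_append] at h0 h0' ⊢
      omega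
    have hEw : ∀ A ∈ eE G i, Sum.inl A ∉ a ++ [Sum.inl (nB G i)] ++ e ++ rst G i ++
        (tl G i ++ q) := by
      intro A hA' hmem
      refine hE A (hEe ▸ hA') ?_
      rw [hB] at hmem
      rw [hw2, hb, ← hrt]
      revert hmem
      simp only [List.mem_append, List.mem_cons]
      tauto
    have hch := chain1 hi hok hca hce hc3 hEw
    have hs : a ++ [Sum.inl (nB G i)] ++ e ++ [Sum.inl (f G i 1)] ++ (tl G i ++ q) =
        p ++ [Sum.inl (f G i 1)] ++ tl G i ++ q := by
      rw [hp, hB]; simp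
    have hf : a ++ zz G i ++ e ++ rst G i ++ (tl G i ++ q) = a ++ r2.rhs ++ b := by
      rw [hb, ← hrt, hz]; simp
    rw [hs, hf] at hch
    exact hch
  · rcases split_single h2nd with ⟨e2, hrh, hb2⟩ | ⟨e2, hq, he2⟩
    · -- B inside r1.rhs
      cases e with
      | nil =>
        -- track case
        have hrh' : r1.rhs = Sum.inl r2.lhs :: e2 := by simpa using hrh
        have htr : track G i := by
          show rst G i = [Sum.inl (nB G i)]
          rw [hB]
          show (pget G i).r1.rhs.take 1 = _
          rw [show (pget G i).r1.rhs = r1.rhs from by rw [hpg], hrh']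
          simp
        have htl : tl G i = e2 := by
          show (pget G i).r1.rhs.drop 1 = e2
          rw [show (pget G i).r1.rhs = r1.rhs from by rw [hpg], hrh']
          simp
        have hce2 : ∀ n, N0 G ≤ n → cnt n (e2 ++ q) = 0 := fun n hn => by
          have h0 := hrhs0 n hn
          have h0' := hcq n hn
          rw [hrh] at h0
          simp only [cnt_append] at h0 ⊢
          omega
        have hEw : ∀ A ∈ eE G i, Sum.inl A ∉ p ++ [Sum.inl (nB G i)] ++ (e2 ++ q) := by
          intro A hA' hmem
          refine hE A (hEe ▸ hA') ?_
          rw [hB] at hmem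
          rw [hw, hrh']
          revert hmem
          simp only [List.mem_append, List.mem_cons]
          tauto
        have hch := chain3 hi hok htr hcp hce2 hEw
        have hs : p ++ [Sum.inl (f G i 1)] ++ (e2 ++ q) =
            p ++ [Sum.inl (f G i 1)] ++ tl G i ++ q := by
          rw [htl]; simp
        have hf : p ++ zz G i ++ (e2 ++ q) = a ++ r2.rhs ++ b := by
          rw [ha, hb2, hz]; simp
        rw [hs, hf] at hch
        exact hch
      | cons c e' =>
        have hrst : rst G i = [c] := by
          show (pget G i).r1.rhs.take 1 = [c]
          rw [show (pget G i).r1.rhs = r1.rhs from by rw [hpg], hrh]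
          simp
        have htl : tl G i = e' ++ [Sum.inl r2.lhs] ++ e2 := by
          show (pget G i).r1.rhs.drop 1 = e' ++ [Sum.inl r2.lhs] ++ e2
          rw [show (pget G i).r1.rhs = r1.rhs from by rw [hpg], hrh]
          simp
        have hce' : ∀ n, N0 G ≤ n → cnt n e' = 0 := fun n hn => by
          have h0 := hrhs0 n hn
          rw [hrh] at h0
          simp only [cnt_append, cnt_cons] at h0 ⊢
          omega
        have hce2 : ∀ n, N0 G ≤ n → cnt n (e2 ++ q) = 0 := fun n hn => by
          have h0 := hrhs0 n hn
          have h0' := hcq n hn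
          rw [hrh] at h0
          simp only [cnt_append] at h0 ⊢
          omega
        have hEw : ∀ A ∈ eE G i, Sum.inl A ∉ p ++ rst G i ++ e' ++ [Sum.inl (nB G i)] ++
            (e2 ++ q) := by
          intro A hA' hmem
          refine hE A (hEe ▸ hA') ?_
          rw [hB] at hmem
          rw [hrst] at hmem
          rw [hw, hrh]
          revert hmem
          simp only [List.mem_append, List.mem_cons]
          tauto
        have hch := chain2 hi hok hcp hce' hce2 hEw
        have hs : p ++ [Sum.inl (f G i 1)] ++ e' ++ [Sum.inl (nB G i)] ++ (e2 ++ q) =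
            p ++ [Sum.inl (f G i 1)] ++ tl G i ++ q := by
          rw [htl, hB]; simp
        have hf : p ++ rst G i ++ e' ++ zz G i ++ (e2 ++ q) = a ++ r2.rhs ++ b := by
          rw [ha, hb2, hz, hrst]; simp
        rw [hs, hf] at hch
        exact hch
    · -- B inside q
      have hce2 : ∀ n, N0 G ≤ n → cnt n (tl G i ++ e2) = 0 := fun n hn => by
        have h0 := htl0 n hn
        have h0' := hcq n hn
        rw [hq] at h0'
        simp only [cnt_append] at h0 h0' ⊢
        omega
      have hcb : ∀ n, N0 G ≤ n → cnt n b = 0 := fun n hn => by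
        have h0' := hcq n hn
        rw [hq] at h0'
        simp only [cnt_append] at h0' ⊢
        omega
      have hEw : ∀ A ∈ eE G i, Sum.inl A ∉ p ++ rst G i ++ (tl G i ++ e2) ++
          [Sum.inl (nB G i)] ++ b := by
        intro A hA' hmem
        refine hE A (hEe ▸ hA') ?_
        rw [hB] at hmem
        rw [hw, ← hrt, hq]
        revert hmem
        simp only [List.mem_append, List.mem_cons]
        tauto
      have hch := chain2 hi hok hcp hce2 hcb hEw
      have hs : p ++ [Sum.inl (f G i 1)] ++ (tl G i ++ e2) ++ [Sum.inl (nB G i)] ++ b =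
          p ++ [Sum.inl (f G i 1)] ++ tl G i ++ q := by
        rw [hq, hB]; simp
      have hf : p ++ rst G i ++ (tl G i ++ e2) ++ zz G i ++ b = a ++ r2.rhs ++ b := by
        rw [ha, he2, ← hrt, hz]; simp
      rw [hs, hf] at hch
      exact hch


/-! ### Final assembly -/

lemma complete {G : FRCCDGS T} {v : Word T} (h : ReachG G v) :
    Relation.ReflTransGen ((target G).SysStep (.eq 2)) [Sum.inl G.start] v := by
  induction h with
  | refl => exact Relation.ReflTransGen.refl
  | @tail b c hpre hstep ih =>
    exact Relation.ReflTransGen.trans ih (complete_step (reachG_pat hpre) hstep)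

lemma start_pat (G : FRCCDGS T) : pat G [Sum.inl G.start] [] := by
  intro n hn
  have := start_lt_N0 G
  simp only [cnt_cons, cnt_nil, List.count_nil, Sum.inl.injEq]
  split_ifs <;> omega

lemma sound_reach {G : FRCCDGS T} {x : Word T}
    (h : Relation.ReflTransGen ((target G).SysStep (.eq 2)) [Sum.inl G.start] x) :
    Inv G x := by
  induction h with
  | refl => exact invClean (start_pat G) Relation.ReflTransGen.refl
  | tail _ hstep ih => exact inv_step ih hstep

lemma lang_eq (G : FRCCDGS T) : (target G).lang (.eq 2) = G.lang (.eq 2) := by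
  ext t
  constructor
  · intro ht
    have hInv := sound_reach (G := G) ht
    rcases hInv with ⟨hpat, hreach⟩ | ⟨i, hi, hok, hcase⟩
    · exact hreach
    · exfalso
      rcases hcase with ⟨hpat, -⟩ | ⟨hpat, -, -⟩ | ⟨hpat, -, -⟩ | ⟨-, hpat, -, -⟩ |
        hpat | hpat | hpat | hpat | hpat
      · have h0 := hpat (f G i 1) (f_ge _ _)
        rw [cnt_encodeWord] at h0; simp [List.count_cons] at h0
      · have h0 := hpat (f G i 3) (f_ge _ _)
        rw [cnt_encodeWord] at h0; simp [List.count_cons] at h0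
      · have h0 := hpat (f G i 5) (f_ge _ _)
        rw [cnt_encodeWord] at h0; simp [List.count_cons] at h0
      · have h0 := hpat (f G i 7) (f_ge _ _)
        rw [cnt_encodeWord] at h0; simp [List.count_cons] at h0
      · have h0 := hpat (f G i 0) (f_ge _ _)
        rw [cnt_encodeWord] at h0; simp [List.count_cons] at h0
      · have h0 := hpat (f G i 3) (f_ge _ _)
        rw [cnt_encodeWord] at h0; simp [List.count_cons] at h0
      · have h0 := hpat (f G i 1) (f_ge _ _)
        rw [cnt_encodeWord] at h0; simp [List.count_cons] at h0
      · have h0 := hpat (f G i 4) (f_ge _ _)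
        rw [cnt_encodeWord] at h0; simp [List.count_cons] at h0
      · have h0 := hpat (f G i 3) (f_ge _ _)
        rw [cnt_encodeWord] at h0; simp [List.count_cons] at h0
  · intro ht
    exact complete ht

lemma target_perm (G : FRCCDGS T) : ∀ C ∈ (target G).comps, C.perm = ∅ := by
  intro C hC
  obtain ⟨i, hi, hok, hrole⟩ := target_comps_mem hC
  rcases hrole with rfl | rfl | rfl | rfl | ⟨htr, rfl | rfl⟩ <;> rfl

lemma target_ne (G : FRCCDGS T) (hne : G.NonErasing) : (target G).NonErasing := by
  intro C hC r hr
  obtain ⟨i, hi, hok, hrole⟩ := target_comps_mem hC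
  have hz : zz G i ≠ [] := hne _ (pv hi).1 _ (pv hi).2.2
  have hr1 : (pget G i).r1.rhs ≠ [] := hne _ (pv hi).1 _ (pv hi).2.1
  have hrst : rst G i ≠ [] := by
    show (pget G i).r1.rhs.take 1 ≠ []
    cases h : (pget G i).r1.rhs with
    | nil => exact absurd h hr1
    | cons s t => simp
  rcases hrole with rfl | rfl | rfl | rfl | ⟨htr, rfl | rfl⟩ <;>
    (simp only [c1, c2, c3, c4, c5, c6, List.mem_cons, List.mem_singleton,
      List.not_mem_nil, or_false] at hr) <;>
    rcases hr with rfl | rfl <;> simp_all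

lemma main_sim (G : FRCCDGS T) :
    ∃ H : RCCDGS T, (∀ C ∈ H.comps, C.perm = ∅) ∧ (G.NonErasing → H.NonErasing) ∧
      G.lang (.eq 2) = H.lang (.eq 2) :=
  ⟨target G, target_perm G, target_ne G, (lang_eq G).symm⟩

end
end Sim

open GrammarSystems

theorem fRCCD_subset_CDfrc' (T : Type) [Fintype T] :
    fRCCD T (.eq 2) ⊆ CDfrc T (.eq 2) ∧ fRCCDne T (.eq 2) ⊆ CDfrcNE T (.eq 2) := by
  constructor
  · rintro L ⟨G, rfl⟩
    obtain ⟨H, hperm, -, hlang⟩ := Sim.main_sim G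
    exact ⟨H, hperm, hlang⟩
  · rintro L ⟨G, hne, rfl⟩
    obtain ⟨H, hperm, hneH, hlang⟩ := Sim.main_sim G
    exact ⟨H, hperm, hneH hne, hlang⟩

open GrammarSystems

/-- `fRCCD(=2) ⊆ CD(=2, frc)` and `fRCCD^{-λ}(=2) ⊆ CD^{-λ}(=2, frc)`. -/
theorem fRCCD_subset_CDfrc (T : Type) [Fintype T] :
    fRCCD T (.eq 2) ⊆ CDfrc T (.eq 2) ∧ fRCCDne T (.eq 2) ⊆ CDfrcNE T (.eq 2) := by
  exact fRCCD_subset_CDfrc' T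
end

section
/- Consider the ordered cooperating distributed grammar system G = ({A,B,C}, {a}, (P₁,>₁), (P₂,>₂), (P₃,>₃), A) with P₁ = {A → B, A → C} and >₁ = ∅, P₂ = {C → C, B → AA} with (C → C) >₂ (B → AA), and P₃ = {B → B, C → a} with (B → B) >₃ (C → a). Then the language generated by G in the t-mode is L(G, t) = {a^{2ⁿ} : n ≥ 0}. -/
open GrammarSystems

/-! The concrete OCDGS of Example 1: nonterminals `A = 0`, `B = 1`, `C = 2`,
terminal alphabet `{a}` modeled by `Unit` (with `a = ()`). -/

/-- Component `G₁` with `P₁ = {A → B, A → C}` and `>₁ = ∅`. -/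
def exComp1 : OComponent Unit where
  rules := [⟨0, [Sum.inl 1]⟩, ⟨0, [Sum.inl 2]⟩]
  gt := fun _ _ => False
  gt_trans := fun h _ => h.elim
  gt_asymm := fun h => h.elim

/-- Component `G₂` with `P₂ = {C → C, B → AA}` and `(C → C) >₂ (B → AA)`. -/
def exComp2 : OComponent Unit where
  rules := [⟨2, [Sum.inl 2]⟩, ⟨1, [Sum.inl 0, Sum.inl 0]⟩]
  gt := fun p q => p.lhs = 2 ∧ q.lhs = 1
  gt_trans := by rintro p q r ⟨hp, h1⟩ ⟨h2, hr⟩; omega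
  gt_asymm := by rintro p q ⟨hp, hq⟩ ⟨hq', hp'⟩; omega

/-- Component `G₃` with `P₃ = {B → B, C → a}` and `(B → B) >₃ (C → a)`. -/
def exComp3 : OComponent Unit where
  rules := [⟨1, [Sum.inl 1]⟩, ⟨2, [Sum.inr ()]⟩]
  gt := fun p q => p.lhs = 1 ∧ q.lhs = 2
  gt_trans := by rintro p q r ⟨hp, h1⟩ ⟨h2, hr⟩; omega
  gt_asymm := by rintro p q ⟨hp, hq⟩ ⟨hq', hp'⟩; omega

/-- The OCDGS `G = ({A,B,C}, {a}, (P₁,>₁), (P₂,>₂), (P₃,>₃), A)`. -/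
def exOCDGS : OCDGS Unit where
  comps := [exComp1, exComp2, exComp3]
  start := 0

section Proof

open Relation List

/-- Local abbreviations. -/
abbrev sA : Sym Unit := Sum.inl 0
abbrev sB : Sym Unit := Sum.inl 1
abbrev sC : Sym Unit := Sum.inl 2
abbrev sa : Sym Unit := Sum.inr ()

lemma rewrites_mem {T : Type} {r : CFRule T} {u v : Word T} (h : r.Rewrites u v) :
    Sum.inl r.lhs ∈ u := by
  obtain ⟨x, z, hu, _⟩ := h; subst hu; simp

lemma exists_rewrite {T : Type} (r : CFRule T) {u : Word T} (h : Sum.inl r.lhs ∈ u) :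
    ∃ v, r.Rewrites u v := by
  obtain ⟨s, t, hu⟩ := List.append_of_mem h
  exact ⟨s ++ r.rhs ++ t, s, t, by simp [hu], rfl⟩

/-- Occurrence count (avoiding `BEq` issues with `List.count`). -/
def cnt (c : Sym Unit) (w : Word Unit) : ℕ := w.countP (fun s => decide (s = c))

lemma cnt_append (c : Sym Unit) (x z : Word Unit) :
    cnt c (x ++ z) = cnt c x + cnt c z := List.countP_append

lemma cnt_eq_zero {c : Sym Unit} {w : Word Unit} (h : c ∉ w) : cnt c w = 0 := by
  rw [cnt, List.countP_eq_zero]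
  intro a ha
  simp only [decide_eq_true_eq]
  rintro rfl; exact h ha

lemma cnt_eq_length {c : Sym Unit} {w : Word Unit} (h : ∀ s ∈ w, s = c) :
    cnt c w = w.length := by
  rw [cnt, List.countP_eq_length]
  intro a ha
  simp only [decide_eq_true_eq]
  exact h a ha

lemma length_eq_cnt {c : Sym Unit} {w : Word Unit} (h : ∀ s ∈ w, s = c) :
    w.length = cnt c w := (cnt_eq_length h).symm

/-! ### No-step lemmas -/

lemma no_step1 {u : Word Unit} (h : sA ∉ u) : ∀ v, ¬ exComp1.Step u v := by
  rintro v ⟨r, hr, hrw, -⟩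
  have := rewrites_mem hrw
  simp only [exComp1, List.mem_cons, List.mem_singleton] at hr
  rcases hr with rfl | rfl | h' <;> first | exact h this | simp at h'

lemma no_step2 {u : Word Unit} (h1 : sB ∉ u) (h2 : sC ∉ u) : ∀ v, ¬ exComp2.Step u v := by
  rintro v ⟨r, hr, hrw, -⟩
  have := rewrites_mem hrw
  simp only [exComp2, List.mem_cons, List.mem_singleton] at hr
  rcases hr with rfl | rfl | h' <;> first | exact h2 this | exact h1 this | simp at h'

lemma no_step3 {u : Word Unit} (h1 : sB ∉ u) (h2 : sC ∉ u) : ∀ v, ¬ exComp3.Step u v := by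
  rintro v ⟨r, hr, hrw, -⟩
  have := rewrites_mem hrw
  simp only [exComp3, List.mem_cons, List.mem_singleton] at hr
  rcases hr with rfl | rfl | h' <;> first | exact h2 this | exact h1 this | simp at h'

/-! ### Existence-of-step lemmas -/

lemma step1_of_mem {u : Word Unit} (h : sA ∈ u) : ∃ v, exComp1.Step u v := by
  obtain ⟨v, hv⟩ := exists_rewrite ⟨0, [sB]⟩ h
  exact ⟨v, ⟨0, [sB]⟩, by simp [exComp1], hv, by simp [exComp1]⟩

lemma step2_C {u : Word Unit} (h : sC ∈ u) : exComp2.Step u u := by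
  obtain ⟨s, t, hu⟩ := List.append_of_mem h
  refine ⟨⟨2, [sC]⟩, by simp [exComp2], ⟨s, t, by simp [hu, sC], by simp [hu, sC]⟩, ?_⟩
  rintro r' hr' hgt
  simp only [exComp2] at hgt
  omega

lemma step2_B {u : Word Unit} (h1 : sB ∈ u) (h2 : sC ∉ u) : ∃ v, exComp2.Step u v := by
  obtain ⟨v, hv⟩ := exists_rewrite ⟨1, [sA, sA]⟩ h1
  refine ⟨v, ⟨1, [sA, sA]⟩, by simp [exComp2], hv, ?_⟩
  rintro r' hr' hgt
  simp only [exComp2, List.mem_cons, List.mem_singleton] at hr' hgt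
  rcases hr' with rfl | rfl | h' <;> simp_all [sC]

lemma step3_B {u : Word Unit} (h : sB ∈ u) : exComp3.Step u u := by
  obtain ⟨s, t, hu⟩ := List.append_of_mem h
  refine ⟨⟨1, [sB]⟩, by simp [exComp3], ⟨s, t, by simp [hu, sB], by simp [hu, sB]⟩, ?_⟩
  rintro r' hr' hgt
  simp only [exComp3] at hgt
  omega

lemma step3_C {u : Word Unit} (h2 : sC ∈ u) (h1 : sB ∉ u) : ∃ v, exComp3.Step u v := by
  obtain ⟨v, hv⟩ := exists_rewrite ⟨2, [sa]⟩ h2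
  refine ⟨v, ⟨2, [sa]⟩, by simp [exComp3], hv, ?_⟩
  rintro r' hr' hgt
  simp only [exComp3, List.mem_cons, List.mem_singleton] at hr' hgt
  rcases hr' with rfl | rfl | h' <;> simp_all [sB]

end Proof
section Proof2
open Relation List

/-- Anything comp2 does from a word containing `C` is the identity. -/
lemma comp2_stay {u v : Word Unit} (h : sC ∈ u) (hs : exComp2.Step u v) : v = u := by
  obtain ⟨r, hr, ⟨x, z, hu, hv⟩, hside⟩ := hs
  simp only [exComp2, List.mem_cons, List.mem_singleton] at hr
  rcases hr with rfl | rfl | h'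
  · simp [hu, hv, sC]
  · exact absurd h (hside ⟨2, [sC]⟩ (by simp [exComp2]) (by simp [exComp2]))
  · simp at h'

/-- Anything comp3 does from a word containing `B` is the identity. -/
lemma comp3_stay {u v : Word Unit} (h : sB ∈ u) (hs : exComp3.Step u v) : v = u := by
  obtain ⟨r, hr, ⟨x, z, hu, hv⟩, hside⟩ := hs
  simp only [exComp3, List.mem_cons, List.mem_singleton] at hr
  rcases hr with rfl | rfl | h'
  · simp [hu, hv, sB]
  · exact absurd h (hside ⟨1, [sB]⟩ (by simp [exComp3]) (by simp [exComp3]))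
  · simp at h'

lemma rtg_eq_of_no_step {α : Type*} {r : α → α → Prop} {u v : α}
    (h : Relation.ReflTransGen r u v) (hn : ∀ w, ¬ r u w) : v = u :=
  (Relation.reflTransGen_iff_eq hn).mp h

lemma rtg_stay {α : Type*} {r : α → α → Prop} {p : α → Prop} {u v : α}
    (h : Relation.ReflTransGen r u v) (hp : p u)
    (hstay : ∀ a b, p a → r a b → b = a) : v = u := by
  induction h with
  | refl => rfl
  | tail _ hbc ih => subst ih; exact hstay _ _ hp hbc

/-- comp1 preserves `length = L` and symbols among `{A, B, C}`. -/
lemma comp1_preserve {L : ℕ} {u v : Word Unit}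
    (hs : exComp1.Step u v)
    (h : u.length = L ∧ ∀ s ∈ u, s = sA ∨ s = sB ∨ s = sC) :
    v.length = L ∧ ∀ s ∈ v, s = sA ∨ s = sB ∨ s = sC := by
  obtain ⟨r, hr, ⟨x, z, hu, hv⟩, -⟩ := hs
  simp only [exComp1, List.mem_cons, List.mem_singleton] at hr
  obtain ⟨hl, hall⟩ := h
  rcases hr with rfl | rfl | h'
  · subst hu hv
    constructor
    · simpa using hl
    · intro s hs
      simp only [List.mem_append, List.mem_singleton] at hs
      rcases hs with (hs | rfl) | hs
      · exact hall s (by simp [hs])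
      · simp
      · exact hall s (by simp [hs])
  · subst hu hv
    constructor
    · simpa using hl
    · intro s hs
      simp only [List.mem_append, List.mem_singleton] at hs
      rcases hs with (hs | rfl) | hs
      · exact hall s (by simp [hs])
      · simp
      · exact hall s (by simp [hs])
  · simp at h'

/-- comp2 preserves: symbols among `{A, B}` and `count A + 2 * count B = M`. -/
lemma comp2_preserve {M : ℕ} {u v : Word Unit}
    (hs : exComp2.Step u v)
    (h : (∀ s ∈ u, s = sA ∨ s = sB) ∧ cnt sA u + 2 * cnt sB u = M) :
    (∀ s ∈ v, s = sA ∨ s = sB) ∧ cnt sA v + 2 * cnt sB v = M := by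
  obtain ⟨r, hr, ⟨x, z, hu, hv⟩, -⟩ := hs
  simp only [exComp2, List.mem_cons, List.mem_singleton] at hr
  obtain ⟨hall, hcnt⟩ := h
  rcases hr with rfl | rfl | h'
  · -- rule C → C : impossible, C does not occur
    exfalso
    have : sC ∈ u := by rw [hu]; simp [sC]
    rcases hall _ this with h | h <;> simp [sA, sB, sC] at h
  · subst hu hv
    refine ⟨?_, ?_⟩
    · intro s hs
      simp only [List.mem_append, List.mem_cons, List.mem_singleton] at hs
      rcases hs with (hs | rfl | rfl | hs) | hs
      · exact hall s (by simp [hs])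
      · simp
      · simp
      · simp at hs
      · exact hall s (by simp [hs])
    · dsimp only at hcnt ⊢
      simp only [cnt_append] at hcnt ⊢
      have e1 : cnt sA ([Sum.inl 1] : Word Unit) = 0 := by decide
      have e2 : cnt sB ([Sum.inl 1] : Word Unit) = 1 := by decide
      have e3 : cnt sA ([Sum.inl 0, Sum.inl 0] : Word Unit) = 2 := by decide
      have e4 : cnt sB ([Sum.inl 0, Sum.inl 0] : Word Unit) = 0 := by decide
      simp only [e1, e2, e3, e4] at hcnt ⊢
      omega
  · simp at h'

/-- comp3 preserves: no `B`, symbols among `{C, a}`, length. -/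
lemma comp3_preserve {L : ℕ} {u v : Word Unit}
    (hs : exComp3.Step u v)
    (h : (∀ s ∈ u, s = sC ∨ s = sa) ∧ u.length = L) :
    (∀ s ∈ v, s = sC ∨ s = sa) ∧ v.length = L := by
  obtain ⟨r, hr, ⟨x, z, hu, hv⟩, -⟩ := hs
  simp only [exComp3, List.mem_cons, List.mem_singleton] at hr
  obtain ⟨hall, hl⟩ := h
  rcases hr with rfl | rfl | h'
  · exfalso
    have : sB ∈ u := by rw [hu]; simp [sB]
    rcases hall _ this with h | h <;> simp [sa, sB, sC] at h
  · subst hu hv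
    refine ⟨?_, by simpa using hl⟩
    intro s hs
    simp only [List.mem_append, List.mem_singleton] at hs
    rcases hs with (hs | rfl) | hs
    · exact hall s (by simp [hs])
    · simp
    · exact hall s (by simp [hs])
  · simp at h'

lemma rtg_preserve {α : Type*} {r : α → α → Prop} {p : α → Prop} {u v : α}
    (h : Relation.ReflTransGen r u v) (hp : p u)
    (hstep : ∀ a b, r a b → p a → p b) : p v := by
  induction h with
  | refl => exact hp
  | tail _ hbc ih => exact hstep _ _ hbc ih

end Proof2
section Proof3
open Relation List

/-- The invariant: every reachable sentential form is `A^{2ⁿ}`, a word over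
`{B, C}` of length `2ⁿ`, or `a^{2ⁿ}`. -/
def Good (w : Word Unit) : Prop := ∃ n : ℕ,
  w = List.replicate (2 ^ n) sA ∨
  (w.length = 2 ^ n ∧ ∀ s ∈ w, s = sB ∨ s = sC) ∨
  w = List.replicate (2 ^ n) sa

lemma good_closed {u v : Word Unit} (hu : Good u) (h : exOCDGS.SysStep .t u v) :
    Good v := by
  obtain ⟨C, hC, hrt, hterm⟩ := h
  simp only [exOCDGS, List.mem_cons, List.mem_singleton, List.not_mem_nil, or_false] at hC
  obtain ⟨n, hA | ⟨hlen, hbc⟩ | ha⟩ := hu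
  · -- u = A^{2ⁿ}
    subst hA
    have hposn : 0 < 2 ^ n := Nat.pow_pos (by norm_num)
    have hBnot : sB ∉ List.replicate (2 ^ n) sA := by
      intro hmem; have := List.eq_of_mem_replicate hmem; simp [sA, sB] at this
    have hCnot : sC ∉ List.replicate (2 ^ n) sA := by
      intro hmem; have := List.eq_of_mem_replicate hmem; simp [sA, sC] at this
    rcases hC with rfl | rfl | rfl
    · -- comp1 : rewrite all A's to B/C
      have hinv := rtg_preserve hrt
        (p := fun w => w.length = 2 ^ n ∧ ∀ s ∈ w, s = sA ∨ s = sB ∨ s = sC)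
        (by constructor
            · simp
            · intro s hs; exact Or.inl (List.eq_of_mem_replicate hs))
        (fun a b hab hp => comp1_preserve hab hp)
      have hAnot : sA ∉ v := by
        intro hmem
        obtain ⟨w, hw⟩ := step1_of_mem hmem
        exact hterm w hw
      refine ⟨n, Or.inr (Or.inl ⟨hinv.1, ?_⟩)⟩
      intro s hs
      rcases hinv.2 s hs with rfl | h | h
      · exact absurd hs hAnot
      · exact Or.inl h
      · exact Or.inr h
    · -- comp2 : cannot move
      rw [rtg_eq_of_no_step hrt (no_step2 hBnot hCnot)]
      exact ⟨n, Or.inl rfl⟩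
    · -- comp3 : cannot move
      rw [rtg_eq_of_no_step hrt (no_step3 hBnot hCnot)]
      exact ⟨n, Or.inl rfl⟩
  · -- u is a {B,C}-word of length 2ⁿ
    have hAnot : sA ∉ u := by
      intro hmem; rcases hbc _ hmem with h | h <;> simp [sA, sB, sC] at h
    rcases hC with rfl | rfl | rfl
    · -- comp1 : cannot move
      rw [rtg_eq_of_no_step hrt (no_step1 hAnot)]
      exact ⟨n, Or.inr (Or.inl ⟨hlen, hbc⟩)⟩
    · -- comp2
      rcases Classical.em (sC ∈ u) with hC2 | hC2
      · -- it loops forever on C → C, no t-step possible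
        exfalso
        have hvu : v = u := rtg_stay hrt hC2 (fun a b ha hab => comp2_stay ha hab)
        subst hvu
        exact hterm v (step2_C hC2)
      · -- u = B^{2ⁿ}; double
        have hallB2 : ∀ s ∈ u, s = sB := by
          intro s hs; rcases hbc s hs with h | h
          · exact h
          · exact absurd (h ▸ hs) hC2
        have hcA : cnt sA u = 0 := cnt_eq_zero hAnot
        have hcB : cnt sB u = u.length := cnt_eq_length hallB2
        have hinv := rtg_preserve hrt
          (p := fun w => (∀ s ∈ w, s = sA ∨ s = sB) ∧
            cnt sA w + 2 * cnt sB w = 2 ^ (n + 1))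
          (by refine ⟨fun s hs => Or.inr (hallB2 s hs), ?_⟩
              rw [hcA, hcB, hlen]; ring)
          (fun a b hab hp => comp2_preserve hab hp)
        have hCnotv : sC ∉ v := by
          intro hmem; rcases hinv.1 _ hmem with h | h <;> simp [sA, sB, sC] at h
        have hBnotv : sB ∉ v := by
          intro hmem
          obtain ⟨w, hw⟩ := step2_B hmem hCnotv
          exact hterm w hw
        have hallA : ∀ s ∈ v, s = sA := by
          intro s hs; rcases hinv.1 s hs with h | h
          · exact h
          · exact absurd (h ▸ hs) hBnotv
        have hcAv : cnt sA v = v.length := cnt_eq_length hallA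
        have hcBv : cnt sB v = 0 := cnt_eq_zero hBnotv
        have hlv : v.length = 2 ^ (n + 1) := by
          have := hinv.2; rw [hcAv, hcBv] at this; omega
        exact ⟨n + 1, Or.inl (List.eq_replicate_iff.mpr ⟨hlv, hallA⟩)⟩
    · -- comp3
      rcases Classical.em (sB ∈ u) with hB3 | hB3
      · exfalso
        have hvu : v = u := rtg_stay hrt hB3 (fun a b ha hab => comp3_stay ha hab)
        subst hvu
        exact hterm v (step3_B hB3)
      · have hallC : ∀ s ∈ u, s = sC := by
          intro s hs; rcases hbc s hs with h | h
          · exact absurd (h ▸ hs) hB3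
          · exact h
        have hinv := rtg_preserve hrt
          (p := fun w => (∀ s ∈ w, s = sC ∨ s = sa) ∧ w.length = 2 ^ n)
          ⟨fun s hs => Or.inl (hallC s hs), hlen⟩
          (fun a b hab hp => comp3_preserve hab hp)
        have hBnotv : sB ∉ v := by
          intro hmem; rcases hinv.1 _ hmem with h | h <;> simp [sa, sB, sC] at h
        have hCnotv : sC ∉ v := by
          intro hmem
          obtain ⟨w, hw⟩ := step3_C hmem hBnotv
          exact hterm w hw
        have halla : ∀ s ∈ v, s = sa := by
          intro s hs; rcases hinv.1 s hs with h | h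
          · exact absurd (h ▸ hs) hCnotv
          · exact h
        exact ⟨n, Or.inr (Or.inr (List.eq_replicate_iff.mpr ⟨hinv.2, halla⟩))⟩
  · -- u = a^{2ⁿ}: terminal, nothing moves
    subst ha
    have hnot : ∀ m : ℕ, (Sum.inl m : Sym Unit) ∉ List.replicate (2 ^ n) sa := by
      intro m hmem; have := List.eq_of_mem_replicate hmem; simp [sa] at this
    rcases hC with rfl | rfl | rfl
    · rw [rtg_eq_of_no_step hrt (no_step1 (hnot 0))]; exact ⟨n, Or.inr (Or.inr rfl)⟩
    · rw [rtg_eq_of_no_step hrt (no_step2 (hnot 1) (hnot 2))]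
      exact ⟨n, Or.inr (Or.inr rfl)⟩
    · rw [rtg_eq_of_no_step hrt (no_step3 (hnot 1) (hnot 2))]
      exact ⟨n, Or.inr (Or.inr rfl)⟩

end Proof3
section Proof4
open Relation List

/-- comp1 can rewrite all `A`'s to `c` for `c ∈ {B, C}`. -/
lemma aux1 (c : Sym Unit) (hc : (⟨0, [c]⟩ : CFRule Unit) ∈ exComp1.rules) :
    ∀ (j : ℕ) (x : Word Unit),
      Relation.ReflTransGen exComp1.Step (x ++ List.replicate j sA)
        (x ++ List.replicate j c) := by
  intro j
  induction j with
  | zero => intro x; exact .refl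
  | succ j ih =>
    intro x
    have hstep : exComp1.Step (x ++ List.replicate (j + 1) sA)
        ((x ++ [c]) ++ List.replicate j sA) := by
      refine ⟨⟨0, [c]⟩, hc, ⟨x, List.replicate j sA, ?_, by simp⟩, ?_⟩
      · simp [List.replicate_succ, sA]
      · intro r' hr' hgt
        simp only [exComp1] at hgt
    have := ih (x ++ [c])
    refine Relation.ReflTransGen.head hstep ?_
    have h2 : (x ++ [c]) ++ List.replicate j c = x ++ List.replicate (j + 1) c := by
      rw [List.append_assoc, List.singleton_append, ← List.replicate_succ]
    exact h2 ▸ this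

/-- comp2 can rewrite all `B`'s to `AA` (in the absence of `C`). -/
lemma aux2 : ∀ (j : ℕ) (x : Word Unit), (∀ s ∈ x, s = sA) →
    Relation.ReflTransGen exComp2.Step (x ++ List.replicate j sB)
      (x ++ List.replicate (2 * j) sA) := by
  intro j
  induction j with
  | zero => intro x _; exact .refl
  | succ j ih =>
    intro x hx
    have hstep : exComp2.Step (x ++ List.replicate (j + 1) sB)
        ((x ++ [sA, sA]) ++ List.replicate j sB) := by
      refine ⟨⟨1, [Sum.inl 0, Sum.inl 0]⟩, by simp [exComp2],
        ⟨x, List.replicate j sB, ?_, by simp [sA]⟩, ?_⟩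
      · simp [List.replicate_succ, sB]
      · intro r' hr' hgt
        simp only [exComp2, List.mem_cons, List.mem_singleton] at hr' hgt
        intro hmem
        simp only [List.mem_append] at hmem
        rcases hmem with hm | hm
        · have := hx _ hm; rw [hgt.1] at this; simp [sA] at this
        · have := List.eq_of_mem_replicate hm; rw [hgt.1] at this; simp [sB] at this
    have hx' : ∀ s ∈ x ++ [sA, sA], s = sA := by
      intro s hs
      simp only [List.mem_append, List.mem_cons, List.mem_singleton] at hs
      rcases hs with hs | rfl | rfl | hs
      · exact hx s hs
      · rfl
      · rfl
      · simp at hs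
    refine Relation.ReflTransGen.head hstep ?_
    have := ih (x ++ [sA, sA]) hx'
    have h2 : (x ++ [sA, sA]) ++ List.replicate (2 * j) sA
        = x ++ List.replicate (2 * (j + 1)) sA := by
      have : 2 * (j + 1) = (2 * j) + 1 + 1 := by ring
      rw [this, List.replicate_succ, List.replicate_succ]
      simp
    exact h2 ▸ this

/-- comp3 can rewrite all `C`'s to `a` (in the absence of `B`). -/
lemma aux3 : ∀ (j : ℕ) (x : Word Unit), (∀ s ∈ x, s = sa) →
    Relation.ReflTransGen exComp3.Step (x ++ List.replicate j sC)
      (x ++ List.replicate j sa) := by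
  intro j
  induction j with
  | zero => intro x _; exact .refl
  | succ j ih =>
    intro x hx
    have hstep : exComp3.Step (x ++ List.replicate (j + 1) sC)
        ((x ++ [sa]) ++ List.replicate j sC) := by
      refine ⟨⟨2, [Sum.inr ()]⟩, by simp [exComp3],
        ⟨x, List.replicate j sC, ?_, by simp [sa]⟩, ?_⟩
      · simp [List.replicate_succ, sC]
      · intro r' hr' hgt
        simp only [exComp3, List.mem_cons, List.mem_singleton] at hr' hgt
        intro hmem
        simp only [List.mem_append] at hmem
        rcases hmem with hm | hm
        · have := hx _ hm; rw [hgt.1] at this; simp [sa] at this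
        · have := List.eq_of_mem_replicate hm; rw [hgt.1] at this; simp [sC] at this
    have hx' : ∀ s ∈ x ++ [sa], s = sa := by
      intro s hs
      simp only [List.mem_append, List.mem_singleton] at hs
      rcases hs with hs | rfl
      · exact hx s hs
      · rfl
    refine Relation.ReflTransGen.head hstep ?_
    have := ih (x ++ [sa]) hx'
    have h2 : (x ++ [sa]) ++ List.replicate j sa = x ++ List.replicate (j + 1) sa := by
      rw [List.append_assoc, List.singleton_append, ← List.replicate_succ]
    exact h2 ▸ this

lemma not_mem_replicate {c d : Sym Unit} (h : c ≠ d) (k : ℕ) :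
    c ∉ List.replicate k d := fun hm => h (List.eq_of_mem_replicate hm)

/-- comp1 t-step: `A^k ⇒ᵗ B^k`. -/
lemma tmode1B (k : ℕ) : ModeRel exComp1.Step .t
    (List.replicate k sA) (List.replicate k sB) := by
  refine ⟨by simpa using aux1 sB (by simp [exComp1, sB]) k [], ?_⟩
  exact fun w hw => no_step1 (not_mem_replicate (by simp [sA, sB]) k) w hw

/-- comp1 t-step: `A^k ⇒ᵗ C^k`. -/
lemma tmode1C (k : ℕ) : ModeRel exComp1.Step .t
    (List.replicate k sA) (List.replicate k sC) := by
  refine ⟨by simpa using aux1 sC (by simp [exComp1, sC]) k [], ?_⟩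
  exact fun w hw => no_step1 (not_mem_replicate (by simp [sA, sC]) k) w hw

/-- comp2 t-step: `B^k ⇒ᵗ A^{2k}`. -/
lemma tmode2 (k : ℕ) : ModeRel exComp2.Step .t
    (List.replicate k sB) (List.replicate (2 * k) sA) := by
  refine ⟨by simpa using aux2 k [] (by simp), ?_⟩
  exact fun w hw => no_step2 (not_mem_replicate (by simp [sA, sB]) _)
    (not_mem_replicate (by simp [sA, sC]) _) w hw

/-- comp3 t-step: `C^k ⇒ᵗ a^k`. -/
lemma tmode3 (k : ℕ) : ModeRel exComp3.Step .t
    (List.replicate k sC) (List.replicate k sa) := by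
  refine ⟨by simpa using aux3 k [] (by simp), ?_⟩
  exact fun w hw => no_step3 (not_mem_replicate (by simp [sa, sB]) _)
    (not_mem_replicate (by simp [sa, sC]) _) w hw

lemma sys1 {u v : Word Unit} (h : ModeRel exComp1.Step .t u v) :
    exOCDGS.SysStep .t u v := ⟨exComp1, by simp [exOCDGS], h⟩
lemma sys2 {u v : Word Unit} (h : ModeRel exComp2.Step .t u v) :
    exOCDGS.SysStep .t u v := ⟨exComp2, by simp [exOCDGS], h⟩
lemma sys3 {u v : Word Unit} (h : ModeRel exComp3.Step .t u v) :
    exOCDGS.SysStep .t u v := ⟨exComp3, by simp [exOCDGS], h⟩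

lemma reach_pow (n : ℕ) : Relation.ReflTransGen (exOCDGS.SysStep .t)
    [Sum.inl 0] (List.replicate (2 ^ n) sA) := by
  induction n with
  | zero => simp [sA]; exact .refl
  | succ n ih =>
    have h1 := (ih.tail (sys1 (tmode1B (2 ^ n)))).tail (sys2 (tmode2 (2 ^ n)))
    have : 2 * 2 ^ n = 2 ^ (n + 1) := by ring
    exact this ▸ h1

end Proof4

/-- `L(G, t) = {a^{2ⁿ} : n ≥ 0}`. -/
theorem exOCDGS_lang :
    exOCDGS.lang .t = {w : List Unit | ∃ n : ℕ, w = List.replicate (2 ^ n) ()} := by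
  ext w
  simp only [OCDGS.lang, langOf, Set.mem_setOf_eq]
  constructor
  · intro hw
    have hgood : Good (encodeWord w) := by
      refine rtg_preserve hw ?_ (fun a b hab hp => good_closed hp hab)
      exact ⟨0, Or.inl (by simp [sA, exOCDGS])⟩
    obtain ⟨n, hA | ⟨hlen, hbc⟩ | ha⟩ := hgood
    · exfalso
      have hposn : 0 < 2 ^ n := Nat.pow_pos (by norm_num)
      have : sA ∈ encodeWord w := by
        rw [hA]; exact List.mem_replicate.mpr ⟨by omega, rfl⟩
      simp only [encodeWord, List.mem_map] at this
      obtain ⟨t, -, ht⟩ := this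
      simp [sA] at ht
    · exfalso
      have hposn : 0 < 2 ^ n := Nat.pow_pos (by norm_num)
      have hne : encodeWord w ≠ [] := by
        intro h; rw [h] at hlen; simp at hlen; omega
      obtain ⟨s, hs⟩ := List.exists_mem_of_ne_nil _ hne
      rcases hbc s hs with rfl | rfl <;>
        · simp only [encodeWord, List.mem_map] at hs
          obtain ⟨t, -, ht⟩ := hs
          simp [sB, sC] at ht
    · refine ⟨n, ?_⟩
      have hlw : w.length = 2 ^ n := by
        have := congrArg List.length ha
        simpa [encodeWord] using this
      exact List.eq_replicate_iff.mpr ⟨hlw, fun b _ => rfl⟩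
  · rintro ⟨n, rfl⟩
    have h1 := (reach_pow n).tail (sys1 (tmode1C (2 ^ n)))
    have h2 := h1.tail (sys3 (tmode3 (2 ^ n)))
    have : encodeWord (List.replicate (2 ^ n) ()) = List.replicate (2 ^ n) sa := by
      simp [encodeWord, sa]
    show Relation.ReflTransGen (exOCDGS.SysStep .t) [Sum.inl 0]
      (encodeWord (List.replicate (2 ^ n) ()))
    rw [this]
    exact h2
end
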